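/- arXiv:2109.06380 — 3 statements merged into one kernel-verified Lean document; each statement's English description precedes it below -/
import Mathlib

section
/- Let P ⊂ ℝⁿ be an (n−1)-dimensional linear subspace with unit normal vector ν, and let c ∈ ℝ. Then there exists a nonnegative C¹ function ψ : ℝⁿ → [0,∞) with compact support such that ∫_P ∇ψ dℋ^{n−1} = c ν. -/
open MeasureTheory Metric Set Filter
open scoped RealInnerProductSpace ENNReal Topology

noncomputable section

/-- Auxiliary measure-theoretic facts: the `(n-1)`-dimensional Hausdorff measure of the
intersection of `P` with closed balls is finite, and with the open unit ball is positive. -/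
lemma stmt10_aux_measure (n : ℕ) (hn : 1 ≤ n)
    (P : Submodule ℝ (EuclideanSpace ℝ (Fin n)))
    (hP : Module.finrank ℝ P = n - 1) :
    (∀ R : ℝ, 0 ≤ R → μH[(n : ℝ) - 1] ((P : Set (EuclideanSpace ℝ (Fin n))) ∩ closedBall 0 R) < ∞)
      ∧ 0 < μH[(n : ℝ) - 1] ((P : Set (EuclideanSpace ℝ (Fin n))) ∩ ball 0 1) := by
  set E := EuclideanSpace ℝ (Fin n)
  set F := EuclideanSpace ℝ (Fin (n - 1))
  have hd0 : (0 : ℝ) ≤ (n : ℝ) - 1 := by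
    have : (1 : ℝ) ≤ (n : ℝ) := by exact_mod_cast hn
    linarith
  have hdF : ((Module.finrank ℝ F : ℕ) : ℝ) = (n : ℝ) - 1 := by
    rw [finrank_euclideanSpace_fin, Nat.cast_sub hn, Nat.cast_one]
  have hμF : (μH[(n : ℝ) - 1] : Measure F) = μH[(Module.finrank ℝ F : ℝ)] := by rw [hdF]
  -- isometric parametrization of P
  have hPF : Module.finrank ℝ P = Module.finrank ℝ F := by
    rw [hP, finrank_euclideanSpace_fin]
  let b : OrthonormalBasis (Fin (n - 1)) ℝ P :=
    (stdOrthonormalBasis ℝ P).reindex (finCongr hP)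
  let e : F ≃ₗᵢ[ℝ] P := b.repr.symm
  let J : F →ₗᵢ[ℝ] E := P.subtypeₗᵢ.comp e.toLinearIsometry
  have hJmem : ∀ y : F, (J y : E) ∈ P := fun y => (e y).2
  have hJnorm : ∀ y : F, ‖J y‖ = ‖y‖ := fun y => J.norm_map y
  have hJsurj : ∀ x : E, x ∈ P → ∃ y : F, J y = x ∧ ‖y‖ = ‖x‖ := by
    intro x hx
    refine ⟨e.symm ⟨x, hx⟩, ?_, ?_⟩
    · show (P.subtype (e (e.symm ⟨x, hx⟩)) : E) = x
      rw [e.apply_symm_apply]; rfl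
    · rw [← hJnorm]
      show ‖(P.subtype (e (e.symm ⟨x, hx⟩)) : E)‖ = _
      rw [e.apply_symm_apply]; rfl
  have him : ∀ s : Set F, μH[(n : ℝ) - 1] (⇑J '' s) = μH[(n : ℝ) - 1] s := fun s =>
    J.isometry.hausdorffMeasure_image (Or.inl hd0) s
  constructor
  · intro R hR
    have hsub : (P : Set E) ∩ closedBall 0 R ⊆ ⇑J '' closedBall 0 R := by
      rintro x ⟨hx, hxR⟩
      obtain ⟨y, hy, hny⟩ := hJsurj x hx
      exact ⟨y, by rw [mem_closedBall_zero_iff, hny, ← mem_closedBall_zero_iff]; exact hxR, hy⟩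
    calc μH[(n : ℝ) - 1] ((P : Set E) ∩ closedBall 0 R) ≤ μH[(n : ℝ) - 1] (⇑J '' closedBall 0 R) :=
          measure_mono hsub
      _ = μH[(n : ℝ) - 1] (closedBall (0 : F) R) := him _
      _ < ∞ := by
          rw [hμF]
          exact (isCompact_closedBall _ _).measure_lt_top
  · have hsub : ⇑J '' ball 0 1 ⊆ (P : Set E) ∩ ball 0 1 := by
      rintro x ⟨y, hy, rfl⟩
      exact ⟨hJmem y, by rw [mem_ball_zero_iff, hJnorm]; exact mem_ball_zero_iff.mp hy⟩
    have hp : (0 : ℝ≥0∞) < μH[(n : ℝ) - 1] (ball (0 : F) 1) := by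
      rw [hμF]
      exact (isOpen_ball).measure_pos _ (nonempty_ball.mpr one_pos)
    calc (0 : ℝ≥0∞) < μH[(n : ℝ) - 1] (ball (0 : F) 1) := hp
      _ = μH[(n : ℝ) - 1] (⇑J '' ball 0 1) := (him _).symm
      _ ≤ μH[(n : ℝ) - 1] ((P : Set E) ∩ ball 0 1) := measure_mono hsub

set_option maxHeartbeats 2000000 in
/-- If `P ⊂ ℝⁿ` is an `(n−1)`-dimensional linear subspace with unit
normal `ν`, then for every `c ∈ ℝ` there is a nonnegative `C¹` function `ψ` with compact
support such that `∫_P ∇ψ dℋ^{n−1} = c ν`. -/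
theorem stmt_10 (n : ℕ) (hn : 1 ≤ n)
    (P : Submodule ℝ (EuclideanSpace ℝ (Fin n)))
    (hP : Module.finrank ℝ P = n - 1)
    (ν : EuclideanSpace ℝ (Fin n)) (hν1 : ‖ν‖ = 1) (hνP : ν ∈ Pᗮ) (c : ℝ) :
    ∃ ψ : EuclideanSpace ℝ (Fin n) → ℝ, ContDiff ℝ 1 ψ ∧ HasCompactSupport ψ ∧
      (∀ x, 0 ≤ ψ x) ∧
      ∫ x in (P : Set (EuclideanSpace ℝ (Fin n))), gradient ψ x ∂(μH[(n : ℝ) - 1])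
        = c • ν := by
  classical
  obtain ⟨hfin, hpos⟩ := stmt10_aux_measure n hn P hP
  have hPc : IsClosed (P : Set (EuclideanSpace ℝ (Fin n))) := Submodule.closed_of_finiteDimensional P
  have hPm : MeasurableSet (P : Set (EuclideanSpace ℝ (Fin n))) := hPc.measurableSet
  set μ : Measure (EuclideanSpace ℝ (Fin n)) := (μH[(n : ℝ) - 1] : Measure (EuclideanSpace ℝ (Fin n))).restrict P with hμdef
  -- μ is finite on compacts
  haveI instF : IsFiniteMeasureOnCompacts μ := by
    constructor
    intro K hK
    obtain ⟨R, hR⟩ := hK.isBounded.subset_closedBall 0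
    have hR0 : 0 ≤ R ∨ K ∩ (P : Set (EuclideanSpace ℝ (Fin n))) = ∅ := by
      rcases le_or_gt 0 R with h | h
      · exact Or.inl h
      · right
        rw [closedBall_eq_empty.2 h] at hR
        rw [subset_empty_iff.1 hR, empty_inter]
    have := Measure.restrict_apply (μ := μH[(n : ℝ) - 1]) (s := (P : Set (EuclideanSpace ℝ (Fin n)))) hK.measurableSet
    rw [hμdef, this]
    rcases hR0 with h | h
    · calc μH[(n : ℝ) - 1] (K ∩ P) ≤ μH[(n : ℝ) - 1] ((P : Set (EuclideanSpace ℝ (Fin n))) ∩ closedBall 0 R) :=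
            measure_mono (fun x hx => ⟨hx.2, hR hx.1⟩)
        _ < ∞ := hfin R h
    · rw [h]; simp
  -- negation is measure preserving on μ
  have hnegP : (fun x : EuclideanSpace ℝ (Fin n) => -x) ⁻¹' (P : Set (EuclideanSpace ℝ (Fin n))) = (P : Set (EuclideanSpace ℝ (Fin n))) := by
    ext x; simp [neg_mem_iff]
  have hnegMP : MeasurePreserving (fun x : EuclideanSpace ℝ (Fin n) => -x) μ μ := by
    have h1 : MeasurePreserving (fun x : EuclideanSpace ℝ (Fin n) => -x) (μH[(n : ℝ) - 1]) (μH[(n : ℝ) - 1]) := by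
      have := (LinearIsometryEquiv.neg ℝ (E := EuclideanSpace ℝ (Fin n))).toIsometryEquiv.measurePreserving_hausdorffMeasure ((n : ℝ) - 1)
      convert this using 2; rfl
    have h2 := h1.restrict_preimage (s := (P : Set (EuclideanSpace ℝ (Fin n)))) hPm
    rwa [hnegP] at h2
  have hnegEmb : MeasurableEmbedding (fun x : EuclideanSpace ℝ (Fin n) => -x) :=
    (Homeomorph.neg (EuclideanSpace ℝ (Fin n))).measurableEmbedding
  have hodd : ∀ G : EuclideanSpace ℝ (Fin n) → EuclideanSpace ℝ (Fin n), (∀ x, G (-x) = -G x) → ∫ x, G x ∂μ = 0 := by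
    intro G hG
    have h1 : ∫ x, G (-x) ∂μ = ∫ x, G x ∂μ := hnegMP.integral_comp hnegEmb G
    have h2 : ∫ x, G (-x) ∂μ = -∫ x, G x ∂μ := by
      simp only [hG]; exact integral_neg G
    have h3 : ∫ x, G x ∂μ = -∫ x, G x ∂μ := h1.symm.trans h2
    have h4 : (2 : ℝ) • ∫ x, G x ∂μ = 0 := by
      rw [two_smul]; nth_rewrite 1 [h3]; exact neg_add_cancel _
    simpa [two_ne_zero] using (smul_eq_zero.mp h4)
  -- the radial bump
  set φ₂ : ContDiffBump (0 : ℝ) := ⟨1, 2, one_pos, one_lt_two⟩ with hφ₂def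
  set B : EuclideanSpace ℝ (Fin n) → ℝ := fun x => φ₂ (‖x‖ ^ 2) with hBdef
  have hBcont : Continuous B := φ₂.continuous.comp ((continuous_norm).pow 2)
  have hBzero : ∀ x : EuclideanSpace ℝ (Fin n), x ∉ closedBall (0 : EuclideanSpace ℝ (Fin n)) 2 → B x = 0 := by
    intro x hx
    rw [mem_closedBall, dist_zero_right, not_le] at hx
    apply φ₂.zero_of_le_dist
    rw [Real.dist_eq, sub_zero, abs_of_nonneg (by positivity)]
    show (2 : ℝ) ≤ ‖x‖ ^ 2
    nlinarith
  have hBsupp : HasCompactSupport B :=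
    HasCompactSupport.intro (isCompact_closedBall (0 : EuclideanSpace ℝ (Fin n)) 2) hBzero
  have hBnn : ∀ x, 0 ≤ B x := fun x => φ₂.nonneg
  have hBint : Integrable B μ := hBcont.integrable_of_hasCompactSupport hBsupp
  -- a = ∫ B > 0
  set a : ℝ := ∫ x, B x ∂μ with hadef
  have hballlt : μ (ball (0 : EuclideanSpace ℝ (Fin n)) 1) < ∞ :=
    lt_of_le_of_lt (measure_mono ball_subset_closedBall)
      ((isCompact_closedBall (0 : EuclideanSpace ℝ (Fin n)) 1).measure_lt_top)
  have hballpos : 0 < μ (ball (0 : EuclideanSpace ℝ (Fin n)) 1) := by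
    rw [hμdef, Measure.restrict_apply measurableSet_ball, inter_comm]
    exact hpos
  have hindint : Integrable ((ball (0 : EuclideanSpace ℝ (Fin n)) 1).indicator fun _ => (1 : ℝ)) μ := by
    rw [integrable_indicator_iff measurableSet_ball]
    exact integrableOn_const hballlt.ne
  have hle : ∀ x, (ball (0 : EuclideanSpace ℝ (Fin n)) 1).indicator (fun _ => (1 : ℝ)) x ≤ B x := by
    intro x
    by_cases hx : x ∈ ball (0 : EuclideanSpace ℝ (Fin n)) 1
    · rw [indicator_of_mem hx]
      have h1 : B x = 1 := by
        apply φ₂.one_of_mem_closedBall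
        rw [mem_ball_zero_iff] at hx
        rw [mem_closedBall, Real.dist_eq, sub_zero, abs_of_nonneg (by positivity)]
        show ‖x‖ ^ 2 ≤ (1 : ℝ)
        nlinarith [norm_nonneg x]
      rw [h1]
    · rw [indicator_of_notMem hx]; exact hBnn x
  have hapos : 0 < a := by
    have h1 : ∫ x, (ball (0 : EuclideanSpace ℝ (Fin n)) 1).indicator (fun _ => (1 : ℝ)) x ∂μ
        = (μ (ball (0 : EuclideanSpace ℝ (Fin n)) 1)).toReal := by
      rw [integral_indicator_const (1 : ℝ) measurableSet_ball, smul_eq_mul, mul_one]; rfl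
    have h2 : 0 < (μ (ball (0 : EuclideanSpace ℝ (Fin n)) 1)).toReal :=
      ENNReal.toReal_pos hballpos.ne' hballlt.ne
    calc (0 : ℝ) < (μ (ball (0 : EuclideanSpace ℝ (Fin n)) 1)).toReal := h2
      _ = ∫ x, (ball (0 : EuclideanSpace ℝ (Fin n)) 1).indicator (fun _ => (1 : ℝ)) x ∂μ := h1.symm
      _ ≤ a := integral_mono hindint hBint hle
  set k : ℝ := c / a with hkdef
  -- the 1D profile
  set r : ℝ := (2 * (1 + |k|))⁻¹ with hrdef
  have hrpos : 0 < r := by positivity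
  set φ : ContDiffBump (0 : ℝ) := ⟨r, 2 * r, hrpos, by linarith⟩ with hφdef
  set f : ℝ → ℝ := fun t => φ t * (1 + k * t) with hfdef
  have hf0 : f 0 = 1 := by
    have h1 : φ 0 = 1 := φ.one_of_mem_closedBall (by simp [φ.rIn_pos.le])
    simp [hfdef, h1]
  have hfnn : ∀ t, 0 ≤ f t := by
    intro t
    rcases le_or_gt (2 * r) |t| with h | h
    · have : φ t = 0 := φ.zero_of_le_dist (by rwa [Real.dist_eq, sub_zero])
      simp [hfdef, this]
    · have h1 : |k * t| < 1 := by
        rw [abs_mul]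
        calc |k| * |t| ≤ |k| * (2 * r) := by
              apply mul_le_mul_of_nonneg_left h.le (abs_nonneg k)
          _ = |k| / (1 + |k|) := by
              rw [hrdef]; field_simp
          _ < 1 := by
              rw [div_lt_one (by positivity)]; linarith
      have h2 : 0 ≤ 1 + k * t := by
        have := abs_lt.mp h1
        linarith [this.1]
      exact mul_nonneg φ.nonneg h2
  have hfd : HasDerivAt f k 0 := by
    have heq : (fun t => 1 + k * t) =ᶠ[𝓝 (0 : ℝ)] f := by
      filter_upwards [Metric.closedBall_mem_nhds (0 : ℝ) hrpos] with t ht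
      have : φ t = 1 := φ.one_of_mem_closedBall ht
      simp [hfdef, this]
    have h1 : HasDerivAt (fun t : ℝ => 1 + k * t) k 0 := by
      simpa using ((hasDerivAt_id (0 : ℝ)).const_mul k).const_add 1
    exact h1.congr_of_eventuallyEq heq.symm
  have hfC : ContDiff ℝ 1 f :=
    (φ.contDiff).mul (contDiff_const.add (contDiff_const.mul contDiff_id))
  -- the test function
  set ψ : EuclideanSpace ℝ (Fin n) → ℝ := fun x => f ⟪ν, x⟫ * B x with hψdef
  have hinner0 : ∀ x ∈ P, ⟪ν, x⟫ = 0 := by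
    intro x hx
    have := (Submodule.mem_orthogonal P ν).mp hνP x hx
    rwa [real_inner_comm] at this
  have hψC : ContDiff ℝ 1 ψ := by
    apply ContDiff.mul
    · exact hfC.comp (ContinuousLinearMap.contDiff (innerSL ℝ ν))
    · exact (φ₂.contDiff).comp (contDiff_norm_sq ℝ)
  have hψsupp : HasCompactSupport ψ := by
    apply HasCompactSupport.intro (isCompact_closedBall (0 : EuclideanSpace ℝ (Fin n)) 2)
    intro x hx
    rw [hψdef]
    simp only
    rw [hBzero x hx, mul_zero]
  have hψnn : ∀ x, 0 ≤ ψ x := fun x => mul_nonneg (hfnn _) (hBnn x)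
  -- gradient formula on P
  set G : EuclideanSpace ℝ (Fin n) → EuclideanSpace ℝ (Fin n) := fun x => (2 * deriv φ₂ (‖x‖ ^ 2)) • x + (k * B x) • ν with hGdef
  have hgrad : ∀ x ∈ (P : Set (EuclideanSpace ℝ (Fin n))), HasGradientAt ψ (G x) x := by
    intro x hx
    have hB' : HasFDerivAt B (deriv φ₂ (‖x‖ ^ 2) • (2 • (innerSL ℝ x))) x := by
      have h1 : HasFDerivAt (fun y : EuclideanSpace ℝ (Fin n) => ‖y‖ ^ 2) (2 • innerSL ℝ x) x :=
        (hasStrictFDerivAt_norm_sq x).hasFDerivAt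
      have h2 : HasDerivAt φ₂ (deriv φ₂ (‖x‖ ^ 2)) (‖x‖ ^ 2) :=
        ((φ₂.contDiff (n := 1)).differentiable (by simp) _).hasDerivAt
      exact h2.comp_hasFDerivAt (f := fun y : EuclideanSpace ℝ (Fin n) => ‖y‖ ^ 2) x h1
    have hu : HasFDerivAt (fun y : EuclideanSpace ℝ (Fin n) => f ⟪ν, y⟫) (k • innerSL ℝ ν) x := by
      have h3 : HasDerivAt f k ⟪ν, x⟫ := by rw [hinner0 x hx]; exact hfd
      exact h3.comp_hasFDerivAt x (innerSL ℝ ν).hasFDerivAt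
    have hmul := hu.mul hB'
    rw [hinner0 x hx, hf0, one_smul] at hmul
    have harr : InnerProductSpace.toDual ℝ (EuclideanSpace ℝ (Fin n)) (G x)
        = deriv φ₂ (‖x‖ ^ 2) • (2 • (innerSL ℝ x)) + B x • (k • innerSL ℝ ν) := by
      ext y
      simp only [InnerProductSpace.toDual_apply_apply, hGdef, ContinuousLinearMap.add_apply,
        ContinuousLinearMap.smul_apply, innerSL_apply_apply, smul_eq_mul, inner_add_left,
        real_inner_smul_left]
      ring
    rw [HasGradientAt, HasGradientAtFilter, harr]
    exact hmul
  -- compute the integral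
  refine ⟨ψ, hψC, hψsupp, hψnn, ?_⟩
  have hstep1 : ∫ x in (P : Set (EuclideanSpace ℝ (Fin n))), gradient ψ x ∂(μH[(n : ℝ) - 1]) = ∫ x, G x ∂μ :=
    setIntegral_congr_fun hPm (fun x hx => (hgrad x hx).gradient)
  set G₁ : EuclideanSpace ℝ (Fin n) → EuclideanSpace ℝ (Fin n) := fun x => (2 * deriv φ₂ (‖x‖ ^ 2)) • x with hG₁def
  set G₂ : EuclideanSpace ℝ (Fin n) → EuclideanSpace ℝ (Fin n) := fun x => (k * B x) • ν with hG₂def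
  have hderivcont : Continuous (deriv φ₂) :=
    ((φ₂.contDiff (n := 2)).continuous_deriv one_le_two)
  have hderivzero : ∀ x : EuclideanSpace ℝ (Fin n), x ∉ closedBall (0 : EuclideanSpace ℝ (Fin n)) 2 → deriv φ₂ (‖x‖ ^ 2) = 0 := by
    intro x hx
    rw [mem_closedBall, dist_zero_right, not_le] at hx
    have ht : (2 : ℝ) < ‖x‖ ^ 2 := by nlinarith
    have heq : φ₂ =ᶠ[𝓝 (‖x‖ ^ 2)] fun _ => (0 : ℝ) := by
      filter_upwards [Ioi_mem_nhds ht] with s hs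
      exact φ₂.zero_of_le_dist (by rw [Real.dist_eq, sub_zero]; exact le_trans (le_of_lt hs) (le_abs_self s))
    rw [heq.deriv_eq, deriv_const]
  have hG₁cont : Continuous G₁ :=
    ((continuous_const.mul (hderivcont.comp ((continuous_norm).pow 2))).smul continuous_id)
  have hG₁supp : HasCompactSupport G₁ := by
    apply HasCompactSupport.intro (isCompact_closedBall (0 : EuclideanSpace ℝ (Fin n)) 2)
    intro x hx
    rw [hG₁def]
    simp only
    rw [hderivzero x hx, mul_zero, zero_smul]
  have hG₁int : Integrable G₁ μ := hG₁cont.integrable_of_hasCompactSupport hG₁supp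
  have hG₂cont : Continuous G₂ := ((continuous_const.mul hBcont).smul continuous_const)
  have hG₂supp : HasCompactSupport G₂ := by
    apply HasCompactSupport.intro (isCompact_closedBall (0 : EuclideanSpace ℝ (Fin n)) 2)
    intro x hx
    rw [hG₂def]
    simp only
    rw [hBzero x hx, mul_zero, zero_smul]
  have hG₂int : Integrable G₂ μ := hG₂cont.integrable_of_hasCompactSupport hG₂supp
  have hGsum : ∫ x, G x ∂μ = (∫ x, G₁ x ∂μ) + ∫ x, G₂ x ∂μ := by
    rw [← integral_add hG₁int hG₂int]
  have hG₁zero : ∫ x, G₁ x ∂μ = 0 := by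
    apply hodd
    intro x
    rw [hG₁def]
    simp only [norm_neg, smul_neg]
  have hG₂val : ∫ x, G₂ x ∂μ = c • ν := by
    rw [hG₂def]
    simp only
    rw [integral_smul_const, integral_const_mul]
    have hka : k * a = c := by rw [hkdef]; field_simp
    rw [← hadef, hka]
  rw [hstep1, hGsum, hG₁zero, hG₂val, zero_add]
end
end

section
/- Let Ω ⊂ ℝⁿ be open and T > 0. Let (μ_i) be Radon measures on Ω×(0,T) converging weakly (as Radon measures) to a Radon measure μ, let C > 0, and let w_i : Ω×(0,T) → ℝ be C¹ functions such that ∫∫ |ψ ∂_t w_i| dx dt ≤ C ( ∫ ψ² dμ_i )^{1/2} for every continuous compactly supported ψ : Ω×(0,T) → ℝ and every i, and such that w_i → w in L¹_loc(Ω×(0,T)). Then there exist a subsequence and a function v ∈ L²(μ) such that for every ψ ∈ C¹_c(Ω×(0,T)), 0 = ∫ ψ v dμ + ∫₀^T ∫_Ω w ∂_tψ dx dt. -/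
open MeasureTheory Metric Set Filter
open scoped RealInnerProductSpace ENNReal Topology

noncomputable section

set_option linter.unusedSectionVars false
set_option linter.unusedVariables false



variable {G : Type*} [NormedAddCommGroup G] [NormedSpace ℝ G]

def pd (f : G × ℝ → ℝ) (z : G × ℝ) : ℝ := deriv (fun τ => f (z.1, τ)) z.2

lemma pd_hasDerivAt_aux {f : G × ℝ → ℝ} {z : G × ℝ} (hf : DifferentiableAt ℝ f z) :
    HasDerivAt (fun τ => f (z.1, τ)) (fderiv ℝ f z ((0 : G), (1 : ℝ))) z.2 := by
  have h1 : HasDerivAt (fun τ : ℝ => ((z.1 : G), τ)) ((0 : G), (1 : ℝ)) z.2 :=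
    HasDerivAt.prodMk (hasDerivAt_const _ _) (hasDerivAt_id _)
  have h2 := hf.hasFDerivAt.comp_hasDerivAt z.2 h1
  exact h2

lemma pd_hasDerivAt {f : G × ℝ → ℝ} {z : G × ℝ} (hf : DifferentiableAt ℝ f z) :
    HasDerivAt (fun τ => f (z.1, τ)) (pd f z) z.2 := by
  have h2 := pd_hasDerivAt_aux hf
  have : pd f z = fderiv ℝ f z ((0 : G), (1 : ℝ)) := h2.deriv
  rw [this]; exact h2

lemma pd_eq_fderiv {f : G × ℝ → ℝ} {z : G × ℝ} (hf : DifferentiableAt ℝ f z) :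
    pd f z = fderiv ℝ f z ((0 : G), (1 : ℝ)) := (pd_hasDerivAt_aux hf).deriv

lemma continuous_pd {f : G × ℝ → ℝ} (hf : ContDiff ℝ 1 f) : Continuous (pd f) := by
  have h : pd f = fun z => fderiv ℝ f z ((0 : G), (1 : ℝ)) :=
    funext fun z => pd_eq_fderiv (hf.differentiable one_ne_zero z)
  rw [h]
  exact (hf.continuous_fderiv one_ne_zero).clm_apply continuous_const

lemma continuousOn_pd {f : G × ℝ → ℝ} {D : Set (G × ℝ)} (hD : IsOpen D)
    (hf : ContDiffOn ℝ 1 f D) : ContinuousOn (pd f) D := by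
  have h : ∀ z ∈ D, pd f z = fderivWithin ℝ f D z ((0 : G), (1 : ℝ)) := by
    intro z hz
    rw [pd_eq_fderiv (((hf.differentiableOn one_ne_zero) z hz).differentiableAt (hD.mem_nhds hz)),
      fderivWithin_of_isOpen hD hz]
  refine ContinuousOn.congr ?_ h
  exact (hf.continuousOn_fderivWithin hD.uniqueDiffOn le_rfl).clm_apply continuousOn_const

lemma pd_eq_zero_of_nmem {f : G × ℝ → ℝ} {z : G × ℝ} (hz : z ∉ tsupport f) : pd f z = 0 := by
  have h : f =ᶠ[𝓝 z] 0 := notMem_tsupport_iff_eventuallyEq.mp hz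
  have hk : Filter.Tendsto (fun τ : ℝ => ((z.1 : G), τ)) (𝓝 z.2) (𝓝 z) := by
    have := (Continuous.prodMk_right z.1).tendsto z.2
    simpa using this
  have hs : (fun τ => f (z.1, τ)) =ᶠ[𝓝 z.2] (fun _ => 0) := h.comp_tendsto hk
  unfold pd
  rw [hs.deriv_eq]
  exact deriv_const _ _

lemma continuous_of_zero_off {α : Type*} [TopologicalSpace α] {f : α → ℝ} {D K : Set α}
    (hD : IsOpen D) (hK : IsClosed K) (hf : ContinuousOn f D) (hKD : K ⊆ D)
    (h0 : ∀ z ∉ K, f z = 0) : Continuous f := by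
  rw [continuous_iff_continuousAt]
  intro z
  by_cases hz : z ∈ D
  · exact hf.continuousAt (hD.mem_nhds hz)
  · have hzK : z ∉ K := fun h => hz (hKD h)
    have h : f =ᶠ[𝓝 z] (fun _ => 0) :=
      Filter.eventually_of_mem (hK.isOpen_compl.mem_nhds hzK) h0
    rw [continuousAt_congr h]
    exact continuousAt_const

section IBP
variable {n : ℕ} {Ω : Set (EuclideanSpace ℝ (Fin n))} {T : ℝ}

local notation "E" => EuclideanSpace ℝ (Fin n)

/-- `ψ ⋅ ∂ₜf` is globally continuous with compact support. -/
lemma cont_mul_pd_right (hΩ : IsOpen Ω) {f ψ : E × ℝ → ℝ}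
    (hf : ContDiffOn ℝ 1 f (Ω ×ˢ Ioo 0 T)) (hψ : ContDiff ℝ 1 ψ)
    (hcs : HasCompactSupport ψ) (hsub : tsupport ψ ⊆ Ω ×ˢ Ioo 0 T) :
    Continuous (fun z => ψ z * pd f z) ∧ HasCompactSupport (fun z => ψ z * pd f z) := by
  have hD : IsOpen (Ω ×ˢ Ioo (0:ℝ) T) := hΩ.prod isOpen_Ioo
  have h0 : ∀ z ∉ tsupport ψ, ψ z * pd f z = 0 := fun z hz => by
    rw [image_eq_zero_of_notMem_tsupport hz, zero_mul]
  refine ⟨continuous_of_zero_off hD (isClosed_tsupport ψ)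
    (hψ.continuous.continuousOn.mul (continuousOn_pd hD hf)) hsub h0,
    HasCompactSupport.intro hcs h0⟩

/-- `f ⋅ ∂ₜψ` is globally continuous with compact support. -/
lemma cont_mul_pd_left (hΩ : IsOpen Ω) {f ψ : E × ℝ → ℝ}
    (hf : ContDiffOn ℝ 1 f (Ω ×ˢ Ioo 0 T)) (hψ : ContDiff ℝ 1 ψ)
    (hcs : HasCompactSupport ψ) (hsub : tsupport ψ ⊆ Ω ×ˢ Ioo 0 T) :
    Continuous (fun z => f z * pd ψ z) ∧ HasCompactSupport (fun z => f z * pd ψ z) := by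
  have hD : IsOpen (Ω ×ˢ Ioo (0:ℝ) T) := hΩ.prod isOpen_Ioo
  have h0 : ∀ z ∉ tsupport ψ, f z * pd ψ z = 0 := fun z hz => by
    rw [pd_eq_zero_of_nmem hz, mul_zero]
  refine ⟨continuous_of_zero_off hD (isClosed_tsupport ψ)
    ((hf.continuousOn).mul (continuous_pd hψ).continuousOn) hsub h0,
    HasCompactSupport.intro hcs h0⟩

lemma ibp (hΩ : IsOpen Ω) (hT : (0:ℝ) < T) {f ψ : E × ℝ → ℝ}
    (hf : ContDiffOn ℝ 1 f (Ω ×ˢ Ioo 0 T)) (hψ : ContDiff ℝ 1 ψ)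
    (hcs : HasCompactSupport ψ) (hsub : tsupport ψ ⊆ Ω ×ˢ Ioo 0 T) :
    ∫ z in Ω ×ˢ Ioo (0:ℝ) T, ψ z * pd f z
      = - ∫ z in Ω ×ˢ Ioo (0:ℝ) T, f z * pd ψ z := by
  have hD : IsOpen (Ω ×ˢ Ioo (0:ℝ) T) := hΩ.prod isOpen_Ioo
  obtain ⟨hc1, hs1⟩ := cont_mul_pd_right hΩ hf hψ hcs hsub
  obtain ⟨hc2, hs2⟩ := cont_mul_pd_left hΩ hf hψ hcs hsub
  set F : E × ℝ → ℝ := fun z => ψ z * pd f z + f z * pd ψ z with hF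
  have hFc : Continuous F := hc1.add hc2
  have hFs : HasCompactSupport F := hs1.add hs2
  have hzero : ∀ z : E × ℝ, z ∉ tsupport ψ → F z = 0 := by
    intro z hz
    simp [hF, image_eq_zero_of_notMem_tsupport hz, pd_eq_zero_of_nmem hz]
  -- the key: ∫_D F = 0
  have key : ∫ z in Ω ×ˢ Ioo (0:ℝ) T, F z = 0 := by
    rcases eq_empty_or_nonempty (tsupport ψ) with hKe | hKne
    · have : ∀ z : E × ℝ, F z = 0 := fun z => hzero z (by simp [hKe])
      simp [this]
    -- nonempty support: pick a', b'
    have htKc : IsCompact (Prod.snd '' tsupport ψ) := hcs.image continuous_snd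
    have htKne : (Prod.snd '' tsupport ψ).Nonempty := hKne.image _
    have htKsub : Prod.snd '' tsupport ψ ⊆ Ioo 0 T := by
      rintro t ⟨z, hz, rfl⟩; exact (hsub hz).2
    set a := sInf (Prod.snd '' tsupport ψ) with ha
    set b := sSup (Prod.snd '' tsupport ψ) with hb
    have hamem : a ∈ Prod.snd '' tsupport ψ := htKc.sInf_mem htKne
    have hbmem : b ∈ Prod.snd '' tsupport ψ := htKc.sSup_mem htKne
    have halb : ∀ t ∈ Prod.snd '' tsupport ψ, a ≤ t ∧ t ≤ b := fun t ht =>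
      ⟨csInf_le htKc.bddBelow ht, le_csSup htKc.bddAbove ht⟩
    have ha0 : 0 < a := (htKsub hamem).1
    have hbT : b < T := (htKsub hbmem).2
    have hab : a ≤ b := (halb a hamem).2
    set a' := a / 2 with ha'
    set b' := (b + T) / 2 with hb'
    have ha'0 : 0 < a' := by positivity
    have ha'a : a' < a := by linarith
    have hbb' : b < b' := by linarith
    have hb'T : b' < T := by linarith
    have ha'b' : a' ≤ b' := by linarith
    -- slices vanish outside [a',b']
    have hFout : ∀ (x : E) (t : ℝ), t ∉ Ioo a' b' → F (x, t) = 0 := by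
      intro x t ht
      refine hzero _ (fun hmem => ht ?_)
      have := halb t ⟨(x, t), hmem, rfl⟩
      exact ⟨lt_of_lt_of_le ha'a this.1, lt_of_le_of_lt this.2 hbb'⟩
    -- inner integral vanishes
    have inner0 : ∀ x : E, ∫ t in Ioo (0:ℝ) T, F (x, t) = 0 := by
      intro x
      by_cases hx : x ∈ Ω
      · have hsubIoo : Ioo a' b' ⊆ Ioo (0:ℝ) T := Ioo_subset_Ioo ha'0.le hb'T.le
        rw [setIntegral_eq_of_subset_of_forall_diff_eq_zero measurableSet_Ioo hsubIoo
          (fun t ht => hFout x t ht.2)]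
        rw [← integral_Ioc_eq_integral_Ioo, ← intervalIntegral.integral_of_le ha'b']
        set g : ℝ → ℝ := fun t => ψ (x, t) * f (x, t) with hg
        have hderiv : ∀ t ∈ uIcc a' b', HasDerivAt g (F (x, t)) t := by
          intro t ht
          rw [uIcc_of_le ha'b'] at ht
          have htIoo : t ∈ Ioo (0:ℝ) T := ⟨lt_of_lt_of_le ha'0 ht.1, lt_of_le_of_lt ht.2 hb'T⟩
          have hmemD : ((x : E), t) ∈ Ω ×ˢ Ioo (0:ℝ) T := ⟨hx, htIoo⟩
          have h1 : HasDerivAt (fun τ => ψ (x, τ)) (pd ψ (x, t)) t :=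
            pd_hasDerivAt (hψ.differentiable one_ne_zero (x, t))
          have h2 : HasDerivAt (fun τ => f (x, τ)) (pd f (x, t)) t :=
            pd_hasDerivAt (((hf.differentiableOn one_ne_zero) _ hmemD).differentiableAt
              (hD.mem_nhds hmemD))
          have := h1.mul h2
          refine HasDerivAt.congr_deriv this ?_
          show _ = ψ (x, t) * pd f (x, t) + f (x, t) * pd ψ (x, t); ring
        have hint : IntervalIntegrable (fun t => F (x, t)) volume a' b' :=
          (hFc.comp (Continuous.prodMk_right x)).intervalIntegrable _ _
        rw [intervalIntegral.integral_eq_sub_of_hasDerivAt hderiv hint]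
        have hga : g a' = 0 := by
          have : ((x : E), a') ∉ tsupport ψ := fun hmem =>
            absurd ((halb a' ⟨_, hmem, rfl⟩).1) (not_le.mpr ha'a)
          simp [hg, image_eq_zero_of_notMem_tsupport this]
        have hgb : g b' = 0 := by
          have : ((x : E), b') ∉ tsupport ψ := fun hmem =>
            absurd ((halb b' ⟨_, hmem, rfl⟩).2) (not_le.mpr hbb')
          simp [hg, image_eq_zero_of_notMem_tsupport this]
        rw [hga, hgb, sub_zero]
      · have : ∀ t : ℝ, F (x, t) = 0 := fun t =>
          hzero _ (fun hmem => hx (hsub hmem).1)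
        simp [this]
    -- Fubini
    have hFint : Integrable F ((volume.restrict Ω).prod (volume.restrict (Ioo (0:ℝ) T))) := by
      rw [Measure.prod_restrict, ← Measure.volume_eq_prod]
      exact (hFc.integrable_of_hasCompactSupport hFs).integrableOn
    calc ∫ z in Ω ×ˢ Ioo (0:ℝ) T, F z
        = ∫ z, F z ∂((volume.restrict Ω).prod (volume.restrict (Ioo (0:ℝ) T))) := by
          rw [Measure.prod_restrict, ← Measure.volume_eq_prod]
      _ = ∫ x, ∫ t, F (x, t) ∂(volume.restrict (Ioo (0:ℝ) T)) ∂(volume.restrict Ω) :=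
          MeasureTheory.integral_prod F hFint
      _ = 0 := by simp [inner0]
  have hi1 : IntegrableOn (fun z => ψ z * pd f z) (Ω ×ˢ Ioo (0:ℝ) T) volume :=
    (hc1.integrable_of_hasCompactSupport hs1).integrableOn
  have hi2 : IntegrableOn (fun z => f z * pd ψ z) (Ω ×ˢ Ioo (0:ℝ) T) volume :=
    (hc2.integrable_of_hasCompactSupport hs2).integrableOn
  have := integral_add hi1 hi2
  rw [hF] at key
  rw [MeasureTheory.integral_add hi1 hi2] at key
  linarith

/-- a bound for the partial derivative of a C¹ compactly supported function -/
lemma pd_bounded {ψ : E × ℝ → ℝ} (hψ : ContDiff ℝ 1 ψ) (hcs : HasCompactSupport ψ) :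
    ∃ M : ℝ, ∀ z, ‖pd ψ z‖ ≤ M := by
  obtain ⟨M, hM⟩ := (continuous_pd hψ).norm.bounded_above_of_compact_support
    (HasCompactSupport.intro hcs (fun z hz => pd_eq_zero_of_nmem hz)).norm
  exact ⟨M, fun z => by simpa using hM z⟩

/-- integrability of `wlim ⋅ ∂ₜψ` on `K` and on the whole domain, plus equality of integrals -/
lemma wlim_pd_int (hΩ : IsOpen Ω) {wlim ψ : E × ℝ → ℝ}
    (hwlim : LocallyIntegrableOn wlim (Ω ×ˢ Ioo (0:ℝ) T))
    (hψ : ContDiff ℝ 1 ψ) (hcs : HasCompactSupport ψ)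
    (hsub : tsupport ψ ⊆ Ω ×ˢ Ioo 0 T) :
    IntegrableOn (fun z => wlim z * pd ψ z) (Ω ×ˢ Ioo (0:ℝ) T)
    ∧ IntegrableOn (fun z => wlim z * pd ψ z) (tsupport ψ)
    ∧ ∫ z in Ω ×ˢ Ioo (0:ℝ) T, wlim z * pd ψ z = ∫ z in tsupport ψ, wlim z * pd ψ z := by
  have hD : IsOpen (Ω ×ˢ Ioo (0:ℝ) T) := hΩ.prod isOpen_Ioo
  have hwK : IntegrableOn wlim (tsupport ψ) := hwlim.integrableOn_compact_subset hsub hcs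
  obtain ⟨M, hM⟩ := pd_bounded hψ hcs
  have hK : IntegrableOn (fun z => wlim z * pd ψ z) (tsupport ψ) := by
    have := hwK.bdd_mul ((continuous_pd hψ).aestronglyMeasurable.restrict) (Filter.Eventually.of_forall hM)
    exact this.congr (Filter.Eventually.of_forall fun z => mul_comm _ _)
  have hzero : ∀ z ∈ (Ω ×ˢ Ioo (0:ℝ) T) \ tsupport ψ, wlim z * pd ψ z = 0 := fun z hz => by
    rw [pd_eq_zero_of_nmem hz.2, mul_zero]
  have hDint : IntegrableOn (fun z => wlim z * pd ψ z) (Ω ×ˢ Ioo (0:ℝ) T) := by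
    rw [← inter_union_diff (Ω ×ˢ Ioo (0:ℝ) T) (tsupport ψ)]
    refine (hK.mono_set inter_subset_right).union ?_
    rw [integrableOn_congr_fun hzero (hD.measurableSet.diff (isClosed_tsupport ψ).measurableSet)]
    exact integrableOn_zero
  exact ⟨hDint, hK, setIntegral_eq_of_subset_of_forall_diff_eq_zero hD.measurableSet hsub hzero⟩

/-- the main bound: `|∫ wlim ∂ₜψ| ≤ C √(∫ ψ² dμ)` -/
lemma L_bound (hΩ : IsOpen Ω) (hT : (0:ℝ) < T)
    (μseq : ℕ → Measure (E × ℝ)) (μ : Measure (E × ℝ))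
    (hconv : ∀ ψ : E × ℝ → ℝ, Continuous ψ →
      HasCompactSupport ψ → tsupport ψ ⊆ Ω ×ˢ Ioo 0 T →
      Filter.Tendsto (fun i => ∫ z, ψ z ∂μseq i) Filter.atTop (nhds (∫ z, ψ z ∂μ)))
    (C : ℝ) (hC : 0 < C) (w : ℕ → E × ℝ → ℝ) (wlim : E × ℝ → ℝ)
    (hwC1 : ∀ i, ContDiffOn ℝ 1 (w i) (Ω ×ˢ Ioo (0:ℝ) T))
    (hbd : ∀ (i : ℕ) (ψ : E × ℝ → ℝ), Continuous ψ →
      HasCompactSupport ψ → tsupport ψ ⊆ Ω ×ˢ Ioo 0 T →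
      ∫ z in Ω ×ˢ Ioo (0:ℝ) T, |ψ z * deriv (fun τ => w i (z.1, τ)) z.2|
        ≤ C * Real.sqrt (∫ z, ψ z ^ 2 ∂μseq i))
    (hwlim : LocallyIntegrableOn wlim (Ω ×ˢ Ioo (0:ℝ) T))
    (hL1 : ∀ K : Set (E × ℝ), IsCompact K → K ⊆ Ω ×ˢ Ioo 0 T →
      Filter.Tendsto (fun i => ∫ z in K, |w i z - wlim z|) Filter.atTop (nhds 0))
    {ψ : E × ℝ → ℝ} (hψ : ContDiff ℝ 1 ψ) (hcs : HasCompactSupport ψ)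
    (hsub : tsupport ψ ⊆ Ω ×ˢ Ioo 0 T) :
    |∫ z in Ω ×ˢ Ioo (0:ℝ) T, wlim z * pd ψ z| ≤ C * Real.sqrt (∫ z, ψ z ^ 2 ∂μ) := by
  have hD : IsOpen (Ω ×ˢ Ioo (0:ℝ) T) := hΩ.prod isOpen_Ioo
  obtain ⟨hwlimD, hwlimK, hwlimEq⟩ := wlim_pd_int hΩ hwlim hψ hcs hsub
  obtain ⟨M, hM⟩ := pd_bounded hψ hcs
  have hM0 : 0 ≤ M := le_trans (norm_nonneg _) (hM 0)
  have hzero : ∀ i, ∀ z ∈ (Ω ×ˢ Ioo (0:ℝ) T) \ tsupport ψ, w i z * pd ψ z = 0 :=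
    fun i z hz => by rw [pd_eq_zero_of_nmem hz.2, mul_zero]
  -- each wᵢ ⋅ ∂ₜψ is integrable on K, with ∫_D = ∫_K
  have hwiK : ∀ i, IntegrableOn (fun z => w i z * pd ψ z) (tsupport ψ) := fun i =>
    ((cont_mul_pd_left hΩ (hwC1 i) hψ hcs hsub).1.integrable_of_hasCompactSupport
      (cont_mul_pd_left hΩ (hwC1 i) hψ hcs hsub).2).integrableOn
  have hwiEq : ∀ i, ∫ z in Ω ×ˢ Ioo (0:ℝ) T, w i z * pd ψ z
      = ∫ z in tsupport ψ, w i z * pd ψ z := fun i =>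
    setIntegral_eq_of_subset_of_forall_diff_eq_zero hD.measurableSet hsub (hzero i)
  -- wᵢ is integrable on K
  have hwiIntK : ∀ i, IntegrableOn (w i) (tsupport ψ) := fun i =>
    ((hwC1 i).continuousOn.mono hsub).integrableOn_compact hcs
  have hwlimIntK : IntegrableOn wlim (tsupport ψ) := hwlim.integrableOn_compact_subset hsub hcs
  -- convergence of ∫_D wᵢ ∂ₜψ to ∫_D wlim ∂ₜψ
  have htendL : Filter.Tendsto (fun i => ∫ z in Ω ×ˢ Ioo (0:ℝ) T, w i z * pd ψ z)
      Filter.atTop (𝓝 (∫ z in Ω ×ˢ Ioo (0:ℝ) T, wlim z * pd ψ z)) := by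
    rw [tendsto_iff_norm_sub_tendsto_zero]
    have hbnd : ∀ i, ‖(∫ z in Ω ×ˢ Ioo (0:ℝ) T, w i z * pd ψ z)
        - ∫ z in Ω ×ˢ Ioo (0:ℝ) T, wlim z * pd ψ z‖
        ≤ M * ∫ z in tsupport ψ, |w i z - wlim z| := by
      intro i
      rw [hwiEq i, hwlimEq, ← integral_sub (hwiK i) hwlimK]
      have h1 : ∀ z, ‖w i z * pd ψ z - wlim z * pd ψ z‖ ≤ M * |w i z - wlim z| := by
        intro z
        rw [← sub_mul, Real.norm_eq_abs, abs_mul]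
        calc |w i z - wlim z| * |pd ψ z| ≤ |w i z - wlim z| * M :=
              mul_le_mul_of_nonneg_left (by simpa [Real.norm_eq_abs] using hM z) (abs_nonneg _)
          _ = M * |w i z - wlim z| := mul_comm _ _
      calc ‖∫ z in tsupport ψ, (w i z * pd ψ z - wlim z * pd ψ z)‖
          ≤ ∫ z in tsupport ψ, M * |w i z - wlim z| := by
            refine norm_integral_le_of_norm_le ?_ (Filter.Eventually.of_forall h1)
            exact (((hwiIntK i).sub hwlimIntK).abs.const_mul M)
        _ = M * ∫ z in tsupport ψ, |w i z - wlim z| := integral_const_mul M _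
    have hMto : Filter.Tendsto (fun i => M * ∫ z in tsupport ψ, |w i z - wlim z|)
        Filter.atTop (𝓝 (M * 0)) := (hL1 (tsupport ψ) hcs hsub).const_mul M
    rw [mul_zero] at hMto
    exact squeeze_zero (fun i => norm_nonneg _) hbnd hMto
  -- convergence of the right-hand side
  have hψsq_cont : Continuous (fun z => ψ z ^ 2) := hψ.continuous.pow 2
  have hψsq_cs : HasCompactSupport (fun z => ψ z ^ 2) :=
    HasCompactSupport.intro hcs (fun z hz => by
      rw [image_eq_zero_of_notMem_tsupport hz]; ring)
  have hψsq_sub : tsupport (fun z => ψ z ^ 2) ⊆ Ω ×ˢ Ioo 0 T := by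
    refine subset_trans (closure_mono ?_) hsub
    intro z hz
    simp only [Function.mem_support] at hz ⊢
    exact fun h => hz (by rw [h]; ring)
  have htendR : Filter.Tendsto (fun i => C * Real.sqrt (∫ z, ψ z ^ 2 ∂μseq i))
      Filter.atTop (𝓝 (C * Real.sqrt (∫ z, ψ z ^ 2 ∂μ))) := by
    have := hconv _ hψsq_cont hψsq_cs hψsq_sub
    exact ((Real.continuous_sqrt.tendsto _).comp this).const_mul C
  -- each |∫_D wᵢ ∂ₜψ| is bounded by the RHS
  have hle : ∀ i, |∫ z in Ω ×ˢ Ioo (0:ℝ) T, w i z * pd ψ z|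
      ≤ C * Real.sqrt (∫ z, ψ z ^ 2 ∂μseq i) := by
    intro i
    have h1 := ibp hΩ hT (hwC1 i) hψ hcs hsub
    have h2 : |∫ z in Ω ×ˢ Ioo (0:ℝ) T, w i z * pd ψ z|
        = |∫ z in Ω ×ˢ Ioo (0:ℝ) T, ψ z * pd (w i) z| := by rw [h1, abs_neg]
    rw [h2]
    calc |∫ z in Ω ×ˢ Ioo (0:ℝ) T, ψ z * pd (w i) z|
        ≤ ∫ z in Ω ×ˢ Ioo (0:ℝ) T, |ψ z * pd (w i) z| := by
          simpa only [Real.norm_eq_abs] using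
            norm_integral_le_integral_norm (μ := volume.restrict (Ω ×ˢ Ioo (0:ℝ) T))
              (fun z => ψ z * pd (w i) z)
      _ ≤ C * Real.sqrt (∫ z, ψ z ^ 2 ∂μseq i) := hbd i ψ hψ.continuous hcs hsub
  exact le_of_tendsto_of_tendsto' ((continuous_abs.tendsto _).comp htendL) htendR hle


end IBP



/-- Abstract kernel: a linear functional on a family of "admissible" functions, bounded
w.r.t. the `L²(μ)` norm, is represented by some `v ∈ L²(μ)`. -/
lemma riesz_of_bound {α : Type*} [MeasurableSpace α] (μ : Measure α)
    (Adm : (α → ℝ) → Prop) (hAdm_mem : ∀ ψ, Adm ψ → MemLp ψ 2 μ)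
    (hAdm_zero : Adm 0)
    (hAdm_add : ∀ ψ₁ ψ₂, Adm ψ₁ → Adm ψ₂ → Adm (ψ₁ + ψ₂))
    (hAdm_smul : ∀ (c : ℝ) ψ, Adm ψ → Adm (c • ψ))
    (L : (α → ℝ) → ℝ) (C : ℝ) (hC : 0 ≤ C)
    (hLadd : ∀ ψ₁ ψ₂, Adm ψ₁ → Adm ψ₂ → L (ψ₁ + ψ₂) = L ψ₁ + L ψ₂)
    (hLsmul : ∀ (c : ℝ) ψ, Adm ψ → L (c • ψ) = c * L ψ)
    (hLbd : ∀ ψ (h : Adm ψ), |L ψ| ≤ C * ‖(hAdm_mem ψ h).toLp ψ‖) :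
    ∃ v : α → ℝ, MemLp v 2 μ ∧ ∀ ψ (h : Adm ψ), ∫ z, ψ z * v z ∂μ = L ψ := by
  -- well-definedness of `L` on `L²` classes
  have hwd : ∀ ψ₁ ψ₂ (h₁ : Adm ψ₁) (h₂ : Adm ψ₂),
      (hAdm_mem ψ₁ h₁).toLp ψ₁ = (hAdm_mem ψ₂ h₂).toLp ψ₂ → L ψ₁ = L ψ₂ := by
    intro ψ₁ ψ₂ h₁ h₂ heq
    have h₂' : Adm ((-1 : ℝ) • ψ₂) := hAdm_smul _ _ h₂
    have hd : Adm (ψ₁ + (-1 : ℝ) • ψ₂) := hAdm_add _ _ h₁ h₂'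
    have hLd : L (ψ₁ + (-1 : ℝ) • ψ₂) = L ψ₁ - L ψ₂ := by
      rw [hLadd _ _ h₁ h₂', hLsmul _ _ h₂]; ring
    have hLz : |L (ψ₁ + (-1 : ℝ) • ψ₂)| ≤ 0 := by
      have hb := hLbd _ hd
      have htoLp : (hAdm_mem _ hd).toLp (ψ₁ + (-1 : ℝ) • ψ₂) = 0 := by
        rw [MemLp.toLp_add (hAdm_mem ψ₁ h₁) (hAdm_mem _ h₂'),
          MemLp.toLp_const_smul (-1 : ℝ) (hAdm_mem ψ₂ h₂), heq]
        simp
      rw [htoLp] at hb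
      simpa using hb
    have : L (ψ₁ + (-1 : ℝ) • ψ₂) = 0 := by
      have := abs_nonneg (L (ψ₁ + (-1 : ℝ) • ψ₂))
      have h0 : |L (ψ₁ + (-1 : ℝ) • ψ₂)| = 0 := le_antisymm hLz this
      exact abs_eq_zero.mp h0
    rw [this] at hLd; linarith
  -- the submodule of admissible classes
  set P : Submodule ℝ (Lp ℝ 2 μ) :=
    { carrier := {x | ∃ ψ, ∃ h : Adm ψ, (hAdm_mem ψ h).toLp ψ = x}
      zero_mem' := ⟨0, hAdm_zero, MemLp.toLp_zero _⟩
      add_mem' := by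
        rintro a b ⟨ψa, ha, rfl⟩ ⟨ψb, hb, rfl⟩
        exact ⟨ψa + ψb, hAdm_add _ _ ha hb, MemLp.toLp_add _ _⟩
      smul_mem' := by
        rintro c a ⟨ψa, ha, rfl⟩
        exact ⟨c • ψa, hAdm_smul c _ ha, MemLp.toLp_const_smul _ _⟩ } with hP
  have hmemP : ∀ x : P, ∃ ψ, ∃ h : Adm ψ, (hAdm_mem ψ h).toLp ψ = (x : Lp ℝ 2 μ) := fun x => x.2
  choose rep hrep hrepeq using hmemP
  -- the linear functional on `P`
  set f : P →ₗ[ℝ] ℝ :=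
    { toFun := fun x => L (rep x)
      map_add' := by
        intro x y
        have h1 : Adm (rep x + rep y) := hAdm_add _ _ (hrep x) (hrep y)
        have h2 : (hAdm_mem _ (hrep (x + y))).toLp (rep (x + y))
            = (hAdm_mem _ h1).toLp (rep x + rep y) := by
          rw [MemLp.toLp_add (hAdm_mem _ (hrep x)) (hAdm_mem _ (hrep y)), hrepeq, hrepeq, hrepeq]
          rfl
        show L (rep (x + y)) = L (rep x) + L (rep y)
        rw [hwd _ _ (hrep _) h1 h2, hLadd _ _ (hrep x) (hrep y)]
      map_smul' := by
        intro c x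
        have h1 : Adm (c • rep x) := hAdm_smul c _ (hrep x)
        have h2 : (hAdm_mem _ (hrep (c • x))).toLp (rep (c • x))
            = (hAdm_mem _ h1).toLp (c • rep x) := by
          rw [MemLp.toLp_const_smul c (hAdm_mem _ (hrep x)), hrepeq, hrepeq]
          rfl
        show L (rep (c • x)) = (RingHom.id ℝ) c • L (rep x)
        rw [hwd _ _ (hrep _) h1 h2, hLsmul _ _ (hrep x)]
        rfl } with hf
  have hfbd : ∀ x : P, ‖f x‖ ≤ C * ‖x‖ := by
    intro x
    have := hLbd (rep x) (hrep x)
    rw [hrepeq x] at this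
    simpa [hf, Real.norm_eq_abs] using this
  set fc : P →L[ℝ] ℝ := f.mkContinuous C hfbd with hfc
  obtain ⟨g, hg, -⟩ := exists_extension_norm_eq P fc
  set v0 : Lp ℝ 2 μ := (InnerProductSpace.toDual ℝ (Lp ℝ 2 μ)).symm g with hv0
  have hv0inner : ∀ x : Lp ℝ 2 μ, ⟪v0, x⟫ = g x := fun x =>
    InnerProductSpace.toDual_symm_apply
  refine ⟨fun z => v0 z, Lp.memLp v0, ?_⟩
  intro ψ h
  have hxmem : (hAdm_mem ψ h).toLp ψ ∈ P := ⟨ψ, h, rfl⟩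
  set x : P := ⟨(hAdm_mem ψ h).toLp ψ, hxmem⟩ with hx
  have h1 : ∫ z, ψ z * v0 z ∂μ = ⟪(hAdm_mem ψ h).toLp ψ, v0⟫ := by
    rw [L2.inner_def]
    refine integral_congr_ae ?_
    filter_upwards [MemLp.coeFn_toLp (hAdm_mem ψ h)] with z hz
    rw [hz]
    simp [RCLike.inner_apply]
    ring
  have h2 : ⟪(hAdm_mem ψ h).toLp ψ, v0⟫ = g ((hAdm_mem ψ h).toLp ψ) := by
    rw [real_inner_comm, hv0inner]
  have h3 : g ((hAdm_mem ψ h).toLp ψ) = fc x := hg x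
  have h4 : fc x = L (rep x) := rfl
  have h5 : L (rep x) = L ψ := hwd _ _ (hrep x) h (by rw [hrepeq x])
  rw [h1, h2, h3, h4, h5]


/-- If Radon measures `μ_i` on `Ω × (0,T)` converge weakly to `μ`,
`w_i` are `C¹` functions with `∫∫|ψ ∂_t w_i| ≤ C (∫ ψ² dμ_i)^{1/2}` for all continuous
compactly supported `ψ`, and `w_i → w` in `L¹_loc`, then there exist a subsequence and
`v ∈ L²(μ)` such that `0 = ∫ ψ v dμ + ∫∫ w ∂_tψ` for all `ψ ∈ C¹_c(Ω × (0,T))`. -/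
theorem stmt_16 (n : ℕ) (Ω : Set (EuclideanSpace ℝ (Fin n))) (hΩ : IsOpen Ω)
    (T : ℝ) (hT : 0 < T)
    (μseq : ℕ → Measure (EuclideanSpace ℝ (Fin n) × ℝ))
    (μ : Measure (EuclideanSpace ℝ (Fin n) × ℝ))
    (hμi : ∀ i, IsFiniteMeasureOnCompacts (μseq i))
    (hμ : IsFiniteMeasureOnCompacts μ)
    (hμsupp : ∀ i, μseq i {z | z ∉ Ω ×ˢ Ioo (0:ℝ) T} = 0)
    (hconv : ∀ ψ : EuclideanSpace ℝ (Fin n) × ℝ → ℝ, Continuous ψ →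
      HasCompactSupport ψ → tsupport ψ ⊆ Ω ×ˢ Ioo 0 T →
      Filter.Tendsto (fun i => ∫ z, ψ z ∂μseq i) Filter.atTop (nhds (∫ z, ψ z ∂μ)))
    (C : ℝ) (hC : 0 < C)
    (w : ℕ → EuclideanSpace ℝ (Fin n) × ℝ → ℝ)
    (wlim : EuclideanSpace ℝ (Fin n) × ℝ → ℝ)
    (hwC1 : ∀ i, ContDiffOn ℝ 1 (w i) (Ω ×ˢ Ioo (0:ℝ) T))
    (hbd : ∀ (i : ℕ) (ψ : EuclideanSpace ℝ (Fin n) × ℝ → ℝ), Continuous ψ →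
      HasCompactSupport ψ → tsupport ψ ⊆ Ω ×ˢ Ioo 0 T →
      ∫ z in Ω ×ˢ Ioo (0:ℝ) T, |ψ z * deriv (fun τ => w i (z.1, τ)) z.2|
        ≤ C * Real.sqrt (∫ z, ψ z ^ 2 ∂μseq i))
    (hwlim : LocallyIntegrableOn wlim (Ω ×ˢ Ioo (0:ℝ) T))
    (hL1 : ∀ K : Set (EuclideanSpace ℝ (Fin n) × ℝ), IsCompact K →
      K ⊆ Ω ×ˢ Ioo 0 T →
      Filter.Tendsto (fun i => ∫ z in K, |w i z - wlim z|) Filter.atTop (nhds 0)) :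
    ∃ φ : ℕ → ℕ, StrictMono φ ∧
      ∃ v : EuclideanSpace ℝ (Fin n) × ℝ → ℝ, MemLp v 2 μ ∧
        ∀ ψ : EuclideanSpace ℝ (Fin n) × ℝ → ℝ, ContDiff ℝ 1 ψ →
          HasCompactSupport ψ → tsupport ψ ⊆ Ω ×ˢ Ioo 0 T →
          0 = (∫ z, ψ z * v z ∂μ)
            + ∫ z in Ω ×ˢ Ioo (0:ℝ) T, wlim z * deriv (fun τ => ψ (z.1, τ)) z.2 := by
  classical
  haveI := hμ
  -- admissible test functions
  set Adm : (EuclideanSpace ℝ (Fin n) × ℝ → ℝ) → Prop := fun ψ =>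
    ContDiff ℝ 1 ψ ∧ HasCompactSupport ψ ∧ tsupport ψ ⊆ Ω ×ˢ Ioo 0 T with hAdm
  have hAdm_mem : ∀ ψ, Adm ψ → MemLp ψ 2 μ := fun ψ h =>
    h.1.continuous.memLp_of_hasCompactSupport h.2.1
  have hAdm_zero : Adm 0 := by
    refine ⟨contDiff_const, HasCompactSupport.intro isCompact_empty (fun x _ => rfl), ?_⟩
    have : tsupport (0 : EuclideanSpace ℝ (Fin n) × ℝ → ℝ) = ∅ := by
      simp [tsupport]
    rw [this]; exact empty_subset _
  have hAdm_add : ∀ ψ₁ ψ₂, Adm ψ₁ → Adm ψ₂ → Adm (ψ₁ + ψ₂) := by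
    intro ψ₁ ψ₂ h₁ h₂
    refine ⟨h₁.1.add h₂.1, h₁.2.1.add h₂.2.1, ?_⟩
    have hsub : tsupport (ψ₁ + ψ₂) ⊆ tsupport ψ₁ ∪ tsupport ψ₂ := by
      refine closure_minimal ?_ ((isClosed_tsupport _).union (isClosed_tsupport _))
      exact (Function.support_add _ _).trans (union_subset_union subset_closure subset_closure)
    exact hsub.trans (union_subset h₁.2.2 h₂.2.2)
  have hAdm_smul : ∀ (c : ℝ) ψ, Adm ψ → Adm (c • ψ) := by
    intro c ψ h
    refine ⟨h.1.const_smul c, HasCompactSupport.intro h.2.1 (fun x hx => by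
      simp [Pi.smul_apply, image_eq_zero_of_notMem_tsupport hx]), ?_⟩
    refine subset_trans (closure_mono ?_) h.2.2
    intro z hz
    simp only [Function.mem_support, Pi.smul_apply, smul_eq_mul] at hz ⊢
    exact fun hψ => hz (by rw [hψ, mul_zero])
  -- pointwise linearity of pd
  have pd_add : ∀ (ψ₁ ψ₂ : EuclideanSpace ℝ (Fin n) × ℝ → ℝ), ContDiff ℝ 1 ψ₁ → ContDiff ℝ 1 ψ₂ →
      ∀ z, pd (ψ₁ + ψ₂) z = pd ψ₁ z + pd ψ₂ z := by
    intro ψ₁ ψ₂ h₁ h₂ z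
    have d1 := pd_hasDerivAt (h₁.differentiable one_ne_zero z)
    have d2 := pd_hasDerivAt (h₂.differentiable one_ne_zero z)
    exact (d1.add d2).deriv
  have pd_smul : ∀ (c : ℝ) (ψ : EuclideanSpace ℝ (Fin n) × ℝ → ℝ), ContDiff ℝ 1 ψ →
      ∀ z, pd (c • ψ) z = c * pd ψ z := by
    intro c ψ h z
    have d := pd_hasDerivAt (h.differentiable one_ne_zero z)
    exact (d.const_mul c).deriv
  -- the linear functional
  set L : (EuclideanSpace ℝ (Fin n) × ℝ → ℝ) → ℝ := fun ψ => -(∫ z in Ω ×ˢ Ioo (0:ℝ) T, wlim z * pd ψ z) with hL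
  have hLadd : ∀ ψ₁ ψ₂, Adm ψ₁ → Adm ψ₂ → L (ψ₁ + ψ₂) = L ψ₁ + L ψ₂ := by
    intro ψ₁ ψ₂ h₁ h₂
    have int1 := (wlim_pd_int hΩ hwlim h₁.1 h₁.2.1 h₁.2.2).1
    have int2 := (wlim_pd_int hΩ hwlim h₂.1 h₂.2.1 h₂.2.2).1
    have heq : (fun z => wlim z * pd (ψ₁ + ψ₂) z)
        = fun z => wlim z * pd ψ₁ z + wlim z * pd ψ₂ z := by
      funext z
      rw [pd_add ψ₁ ψ₂ h₁.1 h₂.1 z]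
      ring
    simp only [hL]
    rw [heq, integral_add int1 int2]
    ring
  have hLsmul : ∀ (c : ℝ) ψ, Adm ψ → L (c • ψ) = c * L ψ := by
    intro c ψ h
    have heq : (fun z => wlim z * pd (c • ψ) z)
        = fun z => c * (wlim z * pd ψ z) := by
      funext z
      rw [pd_smul c ψ h.1 z]
      ring
    simp only [hL]
    rw [heq, integral_const_mul]
    ring
  -- norm identity
  have hnormeq : ∀ (ψ : EuclideanSpace ℝ (Fin n) × ℝ → ℝ) (hm : MemLp ψ 2 μ),
      Real.sqrt (∫ z, ψ z ^ 2 ∂μ) = ‖hm.toLp ψ‖ := by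
    intro ψ hm
    have h1 : ⟪hm.toLp ψ, hm.toLp ψ⟫ = ∫ z, ψ z ^ 2 ∂μ := by
      rw [L2.inner_def]
      refine integral_congr_ae ?_
      filter_upwards [hm.coeFn_toLp] with z hz
      rw [hz]
      simp [RCLike.inner_apply]
    rw [← h1, real_inner_self_eq_norm_sq, Real.sqrt_sq (norm_nonneg _)]
  -- the bound
  have hLbd : ∀ ψ (h : Adm ψ), |L ψ| ≤ C * ‖(hAdm_mem ψ h).toLp ψ‖ := by
    intro ψ h
    rw [← hnormeq ψ (hAdm_mem ψ h)]
    simp only [hL, abs_neg]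
    exact L_bound hΩ hT μseq μ hconv C hC w wlim hwC1 hbd hwlim hL1 h.1 h.2.1 h.2.2
  obtain ⟨v, hv, hrep⟩ := riesz_of_bound μ Adm hAdm_mem hAdm_zero hAdm_add hAdm_smul
    L C hC.le hLadd hLsmul hLbd
  refine ⟨id, strictMono_id, v, hv, ?_⟩
  intro ψ h1 h2 h3
  have := hrep ψ ⟨h1, h2, h3⟩
  simp only [hL] at this
  show 0 = (∫ z, ψ z * v z ∂μ) + ∫ z in Ω ×ˢ Ioo (0:ℝ) T, wlim z * pd ψ z
  linarith
end
end

section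
/- Let n ≥ 2 and let f : B₁×(0,1) → (−1,1) be continuously differentiable in the space variables and continuous, and let V : B₁×(0,1) → ℝ be measurable with ∫₀¹∫_{B₁} V² √(1+|∇f|²) dx dt < ∞. Suppose that for every ψ̃ ∈ C¹_c(B₁×(−2,2)×(0,1)), 0 = ∫₀¹∫_{B₁} ψ̃(x,f(x,t),t) V(x,t) √(1+|∇f(x,t)|²) dx dt + ∫₀¹ ∫_{{(x,y) ∈ B₁×(−2,2) : y < f(x,t)}} (∂_tψ̃)(x,y,t) dx dy dt. Then f possesses a weak time derivative ∂_t f = V√(1+|∇f|²) ∈ L²_loc(B₁×(0,1)); that is, for every ψ ∈ C¹_c(B₁×(0,1)), ∫₀¹∫_{B₁} f ∂_tψ dx dt = −∫₀¹∫_{B₁} ψ V √(1+|∇f|²) dx dt. -/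
open MeasureTheory Metric Set Filter
open scoped RealInnerProductSpace ENNReal Topology

noncomputable section

set_option maxHeartbeats 1000000

/-- If the weak velocity formula holds for the graph measure of
`f : B₁ × (0,1) → (−1,1)` (on `B₁ ⊂ ℝ^{n−1}`, `m = n−1 ≥ 1`) with velocity function `V`
and the subgraph as the limit phase function, then `f` possesses the weak time derivative
`∂_t f = V √(1+|∇f|²) ∈ L²_loc(B₁ × (0,1))`. -/
theorem stmt_17 (m : ℕ) (hm : 1 ≤ m)
    (f : EuclideanSpace ℝ (Fin m) → ℝ → ℝ)
    (f' : EuclideanSpace ℝ (Fin m) → ℝ → EuclideanSpace ℝ (Fin m))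
    (hrange : ∀ x ∈ ball (0 : EuclideanSpace ℝ (Fin m)) 1, ∀ t ∈ Ioo (0:ℝ) 1,
      f x t ∈ Set.Ioo (-1:ℝ) 1)
    (hfc : ContinuousOn (fun z : EuclideanSpace ℝ (Fin m) × ℝ => f z.1 z.2)
      (ball 0 1 ×ˢ Ioo 0 1))
    (hgrad : ∀ x ∈ ball (0 : EuclideanSpace ℝ (Fin m)) 1, ∀ t ∈ Ioo (0:ℝ) 1,
      HasGradientAt (fun y => f y t) (f' x t) x)
    (hf'c : ContinuousOn (fun z : EuclideanSpace ℝ (Fin m) × ℝ => f' z.1 z.2)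
      (ball 0 1 ×ˢ Ioo 0 1))
    (V : EuclideanSpace ℝ (Fin m) → ℝ → ℝ)
    (hVm : Measurable fun z : EuclideanSpace ℝ (Fin m) × ℝ => V z.1 z.2)
    (hV2 : ∫⁻ z in ball (0 : EuclideanSpace ℝ (Fin m)) 1 ×ˢ Ioo (0:ℝ) 1,
        ENNReal.ofReal ((V z.1 z.2) ^ 2 * Real.sqrt (1 + ‖f' z.1 z.2‖ ^ 2)) < ⊤)
    (hyp : ∀ Ψ : EuclideanSpace ℝ (Fin m) × ℝ × ℝ → ℝ, ContDiff ℝ 1 Ψ →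
      HasCompactSupport Ψ →
      tsupport Ψ ⊆ ball 0 1 ×ˢ Ioo (-2:ℝ) 2 ×ˢ Ioo (0:ℝ) 1 →
      0 = (∫ t in Ioo (0:ℝ) 1, ∫ x in ball (0 : EuclideanSpace ℝ (Fin m)) 1,
              Ψ (x, f x t, t) * V x t * Real.sqrt (1 + ‖f' x t‖ ^ 2))
          + ∫ t in Ioo (0:ℝ) 1,
              ∫ z in {z : EuclideanSpace ℝ (Fin m) × ℝ |
                  z.1 ∈ ball (0 : EuclideanSpace ℝ (Fin m)) 1 ∧ z.2 ∈ Set.Ioo (-2:ℝ) 2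
                    ∧ z.2 < f z.1 t},
                deriv (fun τ => Ψ (z.1, z.2, τ)) t) :
    LocallyIntegrableOn
        (fun z : EuclideanSpace ℝ (Fin m) × ℝ =>
          (V z.1 z.2 * Real.sqrt (1 + ‖f' z.1 z.2‖ ^ 2)) ^ 2)
        (ball (0 : EuclideanSpace ℝ (Fin m)) 1 ×ˢ Ioo (0:ℝ) 1) ∧
      ∀ ψ : EuclideanSpace ℝ (Fin m) × ℝ → ℝ, ContDiff ℝ 1 ψ → HasCompactSupport ψ →
        tsupport ψ ⊆ ball 0 1 ×ˢ Ioo 0 1 →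
        ∫ z in ball (0 : EuclideanSpace ℝ (Fin m)) 1 ×ˢ Ioo (0:ℝ) 1,
            f z.1 z.2 * deriv (fun τ => ψ (z.1, τ)) z.2
          = - ∫ z in ball (0 : EuclideanSpace ℝ (Fin m)) 1 ×ˢ Ioo (0:ℝ) 1,
              ψ z * V z.1 z.2 * Real.sqrt (1 + ‖f' z.1 z.2‖ ^ 2) := by
  classical
  set S : Set (EuclideanSpace ℝ (Fin m) × ℝ) :=
    ball (0 : EuclideanSpace ℝ (Fin m)) 1 ×ˢ Ioo (0:ℝ) 1 with hSdef
  have hSopen : IsOpen S := isOpen_ball.prod isOpen_Ioo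
  have hSm : MeasurableSet S := hSopen.measurableSet
  have hsqc : ContinuousOn
      (fun z : EuclideanSpace ℝ (Fin m) × ℝ => Real.sqrt (1 + ‖f' z.1 z.2‖ ^ 2)) S :=
    Real.continuous_sqrt.comp_continuousOn (continuousOn_const.add (hf'c.norm.pow 2))
  have hsq0 : ∀ z : EuclideanSpace ℝ (Fin m) × ℝ,
      (0:ℝ) ≤ Real.sqrt (1 + ‖f' z.1 z.2‖ ^ 2) := fun z => Real.sqrt_nonneg _
  have hVae : AEMeasurable (fun z : EuclideanSpace ℝ (Fin m) × ℝ => V z.1 z.2)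
      (volume.restrict S) := hVm.aemeasurable
  have hsqae : AEMeasurable
      (fun z : EuclideanSpace ℝ (Fin m) × ℝ => Real.sqrt (1 + ‖f' z.1 z.2‖ ^ 2))
      (volume.restrict S) := hsqc.aemeasurable hSm
  have hg_int : IntegrableOn
      (fun z : EuclideanSpace ℝ (Fin m) × ℝ =>
        V z.1 z.2 ^ 2 * Real.sqrt (1 + ‖f' z.1 z.2‖ ^ 2)) S volume := by
    refine ⟨((hVae.pow_const 2).mul hsqae).aestronglyMeasurable, ?_⟩
    rw [hasFiniteIntegral_iff_ofReal (Eventually.of_forall fun z =>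
      mul_nonneg (sq_nonneg _) (Real.sqrt_nonneg _))]
    exact hV2
  have hSfin : volume S < ⊤ := by
    rw [hSdef, Measure.volume_eq_prod, Measure.prod_prod]
    exact ENNReal.mul_lt_top measure_ball_lt_top measure_Ioo_lt_top
  have key : ∀ F : EuclideanSpace ℝ (Fin m) × ℝ → ℝ, IntegrableOn F S volume →
      (∫ z in S, F z)
        = ∫ t in Ioo (0:ℝ) 1, ∫ x in ball (0 : EuclideanSpace ℝ (Fin m)) 1, F (x, t) := by
    intro F hF
    have hF' : Integrable F
        ((volume.restrict (ball (0 : EuclideanSpace ℝ (Fin m)) 1)).prod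
          (volume.restrict (Ioo (0:ℝ) 1))) := by
      rw [Measure.prod_restrict, ← Measure.volume_eq_prod]
      exact hF
    have h1 : (∫ z in S, F z)
        = ∫ x in ball (0 : EuclideanSpace ℝ (Fin m)) 1, ∫ t in Ioo (0:ℝ) 1, F (x, t) := by
      rw [hSdef, show (volume : Measure (EuclideanSpace ℝ (Fin m) × ℝ))
        = (volume : Measure (EuclideanSpace ℝ (Fin m))).prod volume from Measure.volume_eq_prod _ _]
      exact setIntegral_prod F (by rwa [Measure.prod_restrict] at hF')
    rw [h1]
    exact integral_integral_swap hF'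
  have key2 : ∀ F : EuclideanSpace ℝ (Fin m) × ℝ → ℝ, IntegrableOn F S volume →
      (∫ z in S, F z)
        = ∫ x in ball (0 : EuclideanSpace ℝ (Fin m)) 1, ∫ t in Ioo (0:ℝ) 1, F (x, t) := by
    intro F hF
    have hF' : Integrable F
        ((volume.restrict (ball (0 : EuclideanSpace ℝ (Fin m)) 1)).prod
          (volume.restrict (Ioo (0:ℝ) 1))) := by
      rw [Measure.prod_restrict, ← Measure.volume_eq_prod]
      exact hF
    rw [hSdef, show (volume : Measure (EuclideanSpace ℝ (Fin m) × ℝ))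
      = (volume : Measure (EuclideanSpace ℝ (Fin m))).prod volume from Measure.volume_eq_prod _ _]
    exact setIntegral_prod F (by rwa [Measure.prod_restrict] at hF')
  constructor
  · -- local square integrability
    rw [locallyIntegrableOn_iff hSopen.isLocallyClosed]
    intro K hKsub hKc
    obtain ⟨C, hC⟩ := hKc.exists_bound_of_continuousOn (hsqc.mono hKsub)
    have hKm : MeasurableSet K := hKc.measurableSet
    have hsqK : AEMeasurable
        (fun z : EuclideanSpace ℝ (Fin m) × ℝ => Real.sqrt (1 + ‖f' z.1 z.2‖ ^ 2))
        (volume.restrict K) := (hsqc.mono hKsub).aemeasurable hKm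
    refine Integrable.mono' ((hg_int.mono_set hKsub).const_mul C)
      (((hVm.aemeasurable.mul hsqK).pow_const 2).aestronglyMeasurable) ?_
    refine (ae_restrict_iff' hKm).2 (Eventually.of_forall fun z hz => ?_)
    have h1 : Real.sqrt (1 + ‖f' z.1 z.2‖ ^ 2) ≤ C :=
      (le_abs_self _).trans (by simpa [Real.norm_eq_abs] using hC z hz)
    have h2 := hsq0 z
    have h3 : (0:ℝ) ≤ V z.1 z.2 ^ 2 := sq_nonneg _
    rw [Real.norm_eq_abs, abs_of_nonneg (sq_nonneg _)]
    nlinarith [mul_le_mul_of_nonneg_left h1 (mul_nonneg h3 h2)]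
  · -- the integration by parts formula
    intro ψ hψ hψcs hψsub
    -- the bump function
    set θ : ContDiffBump (0:ℝ) := ⟨1, 3/2, one_pos, by norm_num⟩ with hθdef
    have hrIn : θ.rIn = 1 := rfl
    have hrOut : θ.rOut = 3/2 := rfl
    have hθ1 : ∀ y : ℝ, |y| ≤ 1 → θ y = 1 := by
      intro y hy
      refine θ.one_of_mem_closedBall ?_
      rw [hrIn, mem_closedBall, Real.dist_eq, sub_zero]
      exact hy
    have hθc : Continuous θ := θ.continuous
    have hθts : tsupport θ = closedBall (0:ℝ) (3/2) := by rw [θ.tsupport_eq, hrOut]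
    -- the partial derivative in time of ψ
    set D : EuclideanSpace ℝ (Fin m) × ℝ → ℝ :=
      fun z => fderiv ℝ ψ z ((0 : EuclideanSpace ℝ (Fin m)), (1:ℝ)) with hDdef
    have hDeriv : ∀ z : EuclideanSpace ℝ (Fin m) × ℝ,
        HasDerivAt (fun τ => ψ (z.1, τ)) (D z) z.2 := by
      intro z
      have h1 : HasFDerivAt ψ (fderiv ℝ ψ z) z :=
        (hψ.differentiable one_ne_zero z).hasFDerivAt
      have h2 : HasDerivAt (fun τ : ℝ => ((z.1 : EuclideanSpace ℝ (Fin m)), τ))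
          ((0 : EuclideanSpace ℝ (Fin m)), (1:ℝ)) z.2 :=
        (hasDerivAt_const _ _).prodMk (hasDerivAt_id _)
      exact h1.comp_hasDerivAt z.2 h2
    have hDcont : Continuous D :=
      (hψ.continuous_fderiv_apply one_ne_zero).comp (continuous_id.prodMk continuous_const)
    have hDsupp : Function.support D ⊆ tsupport ψ := by
      intro z hz
      have : fderiv ℝ ψ z ≠ 0 := by
        intro h
        apply hz
        simp [hDdef, h]
      exact support_fderiv_subset ℝ this
    have hDzero : ∀ z, z ∉ tsupport ψ → D z = 0 := by
      intro z hz
      by_contra h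
      exact hz (hDsupp h)
    have hDcs : HasCompactSupport D := hψcs.mono' hDsupp
    obtain ⟨Cψ, hCψ⟩ := hψ.continuous.bounded_above_of_compact_support hψcs
    obtain ⟨CD, hCD⟩ := hDcont.bounded_above_of_compact_support hDcs
    have hCψ0 : (0:ℝ) ≤ Cψ := le_trans (norm_nonneg _) (hCψ (0, 0))
    -- the test function for the hypothesis
    set Ψ : EuclideanSpace ℝ (Fin m) × ℝ × ℝ → ℝ :=
      fun p => ψ (p.1, p.2.2) * θ p.2.1 with hΨdef
    have hΨc : ContDiff ℝ 1 Ψ := by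
      refine ContDiff.mul (hψ.comp ?_) (θ.contDiff.comp ?_)
      · exact contDiff_fst.prodMk (contDiff_snd.comp contDiff_snd)
      · exact contDiff_fst.comp contDiff_snd
    have hK0c : IsCompact
        ((fun q : (EuclideanSpace ℝ (Fin m) × ℝ) × ℝ => (q.1.1, q.2, q.1.2)) ''
          (tsupport ψ ×ˢ tsupport θ)) :=
      (hψcs.prod θ.hasCompactSupport).image
        ((continuous_fst.comp continuous_fst).prodMk
          (continuous_snd.prodMk (continuous_snd.comp continuous_fst)))
    have hΨK0 : tsupport Ψ ⊆
        (fun q : (EuclideanSpace ℝ (Fin m) × ℝ) × ℝ => (q.1.1, q.2, q.1.2)) ''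
          (tsupport ψ ×ˢ tsupport θ) := by
      refine closure_minimal ?_ hK0c.isClosed
      intro p hp
      have hp1 : ψ (p.1, p.2.2) ≠ 0 := by
        intro h
        apply hp
        simp [hΨdef, h]
      have hp2 : θ p.2.1 ≠ 0 := by
        intro h
        apply hp
        simp [hΨdef, h]
      exact ⟨((p.1, p.2.2), p.2.1), ⟨subset_closure hp1, subset_closure hp2⟩, rfl⟩
    have hΨcs : HasCompactSupport Ψ := hK0c.of_isClosed_subset isClosed_closure hΨK0
    have hΨsub : tsupport Ψ ⊆ ball 0 1 ×ˢ Ioo (-2:ℝ) 2 ×ˢ Ioo (0:ℝ) 1 := by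
      intro p hp
      obtain ⟨q, ⟨hq1, hq2⟩, rfl⟩ := hΨK0 hp
      have h1 := hψsub hq1
      have h2 : q.2 ∈ closedBall (0:ℝ) (3/2) := by rw [← hθts]; exact hq2
      have h3 := abs_le.1 (by simpa [Real.dist_eq] using mem_closedBall.1 h2)
      exact ⟨h1.1, ⟨by linarith [h3.1], by linarith [h3.2]⟩, h1.2⟩
    have h0 := hyp Ψ hΨc hΨcs hΨsub
    -- integrability of the right-hand side integrand
    obtain ⟨Csq, hCsq⟩ := hψcs.exists_bound_of_continuousOn (hsqc.mono hψsub)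
    have hR_int : IntegrableOn
        (fun z : EuclideanSpace ℝ (Fin m) × ℝ =>
          ψ z * V z.1 z.2 * Real.sqrt (1 + ‖f' z.1 z.2‖ ^ 2)) S volume := by
      have hconst : IntegrableOn
          (fun _ : EuclideanSpace ℝ (Fin m) × ℝ => Cψ * max Csq 0) S volume := by
        refine integrable_const_iff.2 (Or.inr ?_)
        exact ⟨by rwa [Measure.restrict_apply_univ]⟩
      refine Integrable.mono' (hconst.add (hg_int.const_mul Cψ))
        (((hψ.continuous.aemeasurable.mul hVae).mul hsqae).aestronglyMeasurable) ?_
      refine Eventually.of_forall fun z => ?_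
      simp only [Pi.add_apply]
      rw [Real.norm_eq_abs]
      by_cases hz : z ∈ tsupport ψ
      · have hb1 : |ψ z| ≤ Cψ := by simpa [Real.norm_eq_abs] using hCψ z
        have hb2' : Real.sqrt (1 + ‖f' z.1 z.2‖ ^ 2) ≤ Csq := by
          simpa [Real.norm_eq_abs, abs_of_nonneg (hsq0 z)] using hCsq z hz
        have hb2 : Real.sqrt (1 + ‖f' z.1 z.2‖ ^ 2) ≤ max Csq 0 :=
          hb2'.trans (le_max_left _ _)
        have hb3 : |V z.1 z.2| ≤ 1 + V z.1 z.2 ^ 2 := by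
          nlinarith [abs_nonneg (V z.1 z.2), sq_abs (V z.1 z.2)]
        calc |ψ z * V z.1 z.2 * Real.sqrt (1 + ‖f' z.1 z.2‖ ^ 2)|
            = |ψ z| * |V z.1 z.2| * Real.sqrt (1 + ‖f' z.1 z.2‖ ^ 2) := by
              rw [abs_mul, abs_mul, abs_of_nonneg (hsq0 z)]
          _ ≤ Cψ * ((1 + V z.1 z.2 ^ 2) * Real.sqrt (1 + ‖f' z.1 z.2‖ ^ 2)) := by
              have e1 : |V z.1 z.2| * Real.sqrt (1 + ‖f' z.1 z.2‖ ^ 2)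
                  ≤ (1 + V z.1 z.2 ^ 2) * Real.sqrt (1 + ‖f' z.1 z.2‖ ^ 2) :=
                mul_le_mul_of_nonneg_right hb3 (hsq0 z)
              have e2 : (0:ℝ) ≤ |V z.1 z.2| * Real.sqrt (1 + ‖f' z.1 z.2‖ ^ 2) :=
                mul_nonneg (abs_nonneg _) (hsq0 z)
              nlinarith [mul_le_mul_of_nonneg_right hb1 e2,
                mul_le_mul_of_nonneg_left e1 hCψ0]
          _ = Cψ * Real.sqrt (1 + ‖f' z.1 z.2‖ ^ 2)
              + Cψ * (V z.1 z.2 ^ 2 * Real.sqrt (1 + ‖f' z.1 z.2‖ ^ 2)) := by ring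
          _ ≤ Cψ * max Csq 0
              + Cψ * (V z.1 z.2 ^ 2 * Real.sqrt (1 + ‖f' z.1 z.2‖ ^ 2)) := by
              have := mul_le_mul_of_nonneg_left hb2 hCψ0
              linarith
      · rw [image_eq_zero_of_notMem_tsupport hz, zero_mul, zero_mul, abs_zero]
        have e1 : (0:ℝ) ≤ Cψ * max Csq 0 := mul_nonneg hCψ0 (le_max_right _ _)
        have e2 : (0:ℝ) ≤ Cψ * (V z.1 z.2 ^ 2 * Real.sqrt (1 + ‖f' z.1 z.2‖ ^ 2)) :=
          mul_nonneg hCψ0 (mul_nonneg (sq_nonneg _) (hsq0 z))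
        linarith
    -- integrability of D and f·D
    have hD_int : IntegrableOn D S volume :=
      (hDcont.integrable_of_hasCompactSupport hDcs).integrableOn
    have hfD_int : IntegrableOn
        (fun z : EuclideanSpace ℝ (Fin m) × ℝ => f z.1 z.2 * D z) S volume := by
      have h1 : IntegrableOn (fun z : EuclideanSpace ℝ (Fin m) × ℝ => f z.1 z.2 * D z)
          (tsupport ψ) volume :=
        ContinuousOn.integrableOn_compact hψcs ((hfc.mono hψsub).mul hDcont.continuousOn)
      exact (h1.integrable_of_forall_notMem_eq_zero
        (fun z hz => by rw [hDzero z hz, mul_zero])).integrableOn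
    set c₀ : ℝ := (∫ y in (-2:ℝ)..(-1:ℝ), θ y) + 1 with hc₀def
    have hfcD_int : IntegrableOn
        (fun z : EuclideanSpace ℝ (Fin m) × ℝ => (f z.1 z.2 + c₀) * D z) S volume := by
      simpa only [add_mul, Pi.add_def] using hfD_int.add (hD_int.const_mul c₀)
    -- the vanishing of the time integral of D
    have hinner0 : ∀ x : EuclideanSpace ℝ (Fin m), (∫ t in Ioo (0:ℝ) 1, D (x, t)) = 0 := by
      intro x
      have h1 : (∫ t in Ioo (0:ℝ) 1, D (x, t)) = ∫ t in (0:ℝ)..1, D (x, t) := by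
        rw [intervalIntegral.integral_of_le zero_le_one, integral_Ioc_eq_integral_Ioo]
      have h2 : ∀ τ : ℝ, τ ∈ uIcc (0:ℝ) 1 → HasDerivAt (fun τ => ψ (x, τ)) (D (x, τ)) τ :=
        fun τ _ => hDeriv (x, τ)
      rw [h1, intervalIntegral.integral_eq_sub_of_hasDerivAt h2
        ((hDcont.comp (continuous_const.prodMk continuous_id)).intervalIntegrable _ _)]
      have e1 : ψ (x, 1) = 0 := by
        refine image_eq_zero_of_notMem_tsupport fun h => ?_
        have := (hψsub h).2
        norm_num [mem_Ioo] at this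
      have e0 : ψ (x, 0) = 0 := by
        refine image_eq_zero_of_notMem_tsupport fun h => ?_
        have := (hψsub h).2
        norm_num [mem_Ioo] at this
      simp [e1, e0]
    have hD0 : (∫ z in S, D z) = 0 := by
      rw [key2 D hD_int,
        setIntegral_congr_fun measurableSet_ball (g := fun _ => (0:ℝ))
          (fun x _ => hinner0 x)]
      simp
    -- the bump integral
    have hΘ : ∀ s : ℝ, s ∈ Icc (-1:ℝ) 1 → (∫ y in Ioo (-2:ℝ) s, θ y) = s + c₀ := by
      intro s hs
      have hii : ∀ a b : ℝ, IntervalIntegrable θ volume a b :=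
        fun a b => θ.continuous.intervalIntegrable a b
      have h1 : (∫ y in Ioo (-2:ℝ) s, θ y) = ∫ y in (-2:ℝ)..s, θ y := by
        rw [intervalIntegral.integral_of_le (by linarith [hs.1]),
          integral_Ioc_eq_integral_Ioo]
      have h2 := intervalIntegral.integral_add_adjacent_intervals
        (hii (-2) (-1)) (hii (-1) s)
      have h3 : (∫ y in (-1:ℝ)..s, θ y) = s + 1 := by
        rw [intervalIntegral.integral_congr (g := fun _ => (1:ℝ)) ?_,
          intervalIntegral.integral_const, smul_eq_mul, mul_one]
        · ring
        · intro y hy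
          have hy' : y ∈ Icc (-1:ℝ) s := by
            rwa [uIcc_of_le (by linarith [hs.1])] at hy
          exact hθ1 y (abs_le.2 ⟨hy'.1, hy'.2.trans hs.2⟩)
      rw [h1, ← h2, h3, hc₀def]
      ring
    -- main computation for each time slice
    have hstep : ∀ t ∈ Ioo (0:ℝ) 1,
        (∫ z in {z : EuclideanSpace ℝ (Fin m) × ℝ |
            z.1 ∈ ball (0 : EuclideanSpace ℝ (Fin m)) 1 ∧ z.2 ∈ Set.Ioo (-2:ℝ) 2
              ∧ z.2 < f z.1 t},
          deriv (fun τ => Ψ (z.1, z.2, τ)) t)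
        = ∫ x in ball (0 : EuclideanSpace ℝ (Fin m)) 1, (f x t + c₀) * D (x, t) := by
      intro t ht
      set A : Set (EuclideanSpace ℝ (Fin m) × ℝ) :=
        {z : EuclideanSpace ℝ (Fin m) × ℝ |
          z.1 ∈ ball (0 : EuclideanSpace ℝ (Fin m)) 1 ∧ z.2 ∈ Set.Ioo (-2:ℝ) 2
            ∧ z.2 < f z.1 t} with hAdef
      have hder : (fun z : EuclideanSpace ℝ (Fin m) × ℝ =>
          deriv (fun τ => Ψ (z.1, z.2, τ)) t)
          = fun z : EuclideanSpace ℝ (Fin m) × ℝ => D (z.1, t) * θ z.2 := by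
        funext z
        exact ((hDeriv (z.1, t)).mul_const (θ z.2)).deriv
      have hB2open : IsOpen ((ball (0 : EuclideanSpace ℝ (Fin m)) 1) ×ˢ Ioo (-2:ℝ) 2) :=
        isOpen_ball.prod isOpen_Ioo
      have hB2m := hB2open.measurableSet
      have hAopen : IsOpen A := by
        have hco : ContinuousOn (fun z : EuclideanSpace ℝ (Fin m) × ℝ => f z.1 t - z.2)
            ((ball (0 : EuclideanSpace ℝ (Fin m)) 1) ×ˢ Ioo (-2:ℝ) 2) := by
          refine ContinuousOn.sub ?_ continuous_snd.continuousOn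
          refine hfc.comp (continuous_fst.prodMk continuous_const).continuousOn ?_
          intro z hz
          exact ⟨hz.1, ht⟩
        have hoo := hco.isOpen_inter_preimage hB2open (isOpen_Ioi (a := (0:ℝ)))
        convert hoo using 1
        ext z
        simp only [hAdef, mem_setOf_eq, mem_inter_iff, mem_prod, mem_preimage, mem_Ioi]
        constructor
        · rintro ⟨h1, h2, h3⟩; exact ⟨⟨h1, h2⟩, by linarith⟩
        · rintro ⟨⟨h1, h2⟩, h3⟩; exact ⟨h1, h2, by linarith⟩
      have hAm := hAopen.measurableSet
      have hAsub : A ⊆ (ball (0 : EuclideanSpace ℝ (Fin m)) 1) ×ˢ Ioo (-2:ℝ) 2 :=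
        fun z hz => ⟨hz.1, hz.2.1⟩
      have hB2fin : volume ((ball (0 : EuclideanSpace ℝ (Fin m)) 1) ×ˢ Ioo (-2:ℝ) 2) < ⊤ := by
        rw [Measure.volume_eq_prod, Measure.prod_prod]
        exact ENNReal.mul_lt_top measure_ball_lt_top measure_Ioo_lt_top
      have hFt_cont : Continuous
          (fun z : EuclideanSpace ℝ (Fin m) × ℝ => D (z.1, t) * θ z.2) :=
        ((hDcont.comp (continuous_fst.prodMk continuous_const)).mul
          (hθc.comp continuous_snd))
      have hFt_int : IntegrableOn
          (fun z : EuclideanSpace ℝ (Fin m) × ℝ => D (z.1, t) * θ z.2)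
          ((ball (0 : EuclideanSpace ℝ (Fin m)) 1) ×ˢ Ioo (-2:ℝ) 2) volume := by
        refine Integrable.mono' (g := fun _ => CD) ?_ hFt_cont.aestronglyMeasurable ?_
        · refine integrable_const_iff.2 (Or.inr ?_)
          exact ⟨by rwa [Measure.restrict_apply_univ]⟩
        · refine Eventually.of_forall fun z => ?_
          rw [Real.norm_eq_abs, abs_mul]
          have hb1 : |D (z.1, t)| ≤ CD := by
            simpa [Real.norm_eq_abs] using hCD (z.1, t)
          have hb2 : |θ z.2| ≤ 1 := by
            rw [abs_of_nonneg θ.nonneg]; exact θ.le_one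
          nlinarith [abs_nonneg (D (z.1, t)), abs_nonneg (θ z.2)]
      have hind_int : IntegrableOn
          (A.indicator (fun z : EuclideanSpace ℝ (Fin m) × ℝ => D (z.1, t) * θ z.2))
          ((ball (0 : EuclideanSpace ℝ (Fin m)) 1) ×ˢ Ioo (-2:ℝ) 2) volume :=
        hFt_int.indicator hAm
      have e1 : (∫ z in A, D (z.1, t) * θ z.2)
          = ∫ z in (ball (0 : EuclideanSpace ℝ (Fin m)) 1) ×ˢ Ioo (-2:ℝ) 2,
              A.indicator (fun z : EuclideanSpace ℝ (Fin m) × ℝ => D (z.1, t) * θ z.2) z := by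
        rw [setIntegral_indicator hAm, inter_eq_self_of_subset_right hAsub]
      have e2 : (∫ z in (ball (0 : EuclideanSpace ℝ (Fin m)) 1) ×ˢ Ioo (-2:ℝ) 2,
            A.indicator (fun z : EuclideanSpace ℝ (Fin m) × ℝ => D (z.1, t) * θ z.2) z)
          = ∫ x in ball (0 : EuclideanSpace ℝ (Fin m)) 1, ∫ y in Ioo (-2:ℝ) 2,
              A.indicator (fun z : EuclideanSpace ℝ (Fin m) × ℝ => D (z.1, t) * θ z.2)
                (x, y) := by
        rw [show (volume : Measure (EuclideanSpace ℝ (Fin m) × ℝ))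
          = (volume : Measure (EuclideanSpace ℝ (Fin m))).prod volume from
          Measure.volume_eq_prod _ _]
        refine setIntegral_prod _ ?_
        rwa [show ((volume : Measure (EuclideanSpace ℝ (Fin m))).prod volume)
          = (volume : Measure (EuclideanSpace ℝ (Fin m) × ℝ)) from (Measure.volume_eq_prod _ _).symm]
      have e3 : ∀ x ∈ ball (0 : EuclideanSpace ℝ (Fin m)) 1,
          (∫ y in Ioo (-2:ℝ) 2,
            A.indicator (fun z : EuclideanSpace ℝ (Fin m) × ℝ => D (z.1, t) * θ z.2) (x, y))
          = (f x t + c₀) * D (x, t) := by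
        intro x hx
        have hfx := hrange x hx t ht
        have e31 : ∀ y ∈ Ioo (-2:ℝ) 2,
            A.indicator (fun z : EuclideanSpace ℝ (Fin m) × ℝ => D (z.1, t) * θ z.2) (x, y)
              = (Ioo (-2:ℝ) (f x t)).indicator (fun y => D (x, t) * θ y) y := by
          intro y hy
          by_cases hyf : y < f x t
          · rw [indicator_of_mem (show (x, y) ∈ A from ⟨hx, hy, hyf⟩),
              indicator_of_mem (show y ∈ Ioo (-2:ℝ) (f x t) from ⟨hy.1, hyf⟩)]
          · rw [indicator_of_notMem (fun h => hyf (hAdef ▸ h).2.2),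
              indicator_of_notMem (fun h : y ∈ Ioo (-2:ℝ) (f x t) => hyf h.2)]
        rw [setIntegral_congr_fun measurableSet_Ioo e31,
          setIntegral_indicator measurableSet_Ioo,
          show Ioo (-2:ℝ) 2 ∩ Ioo (-2:ℝ) (f x t) = Ioo (-2:ℝ) (f x t) from by
            rw [Ioo_inter_Ioo, sup_idem, inf_eq_right.mpr (hfx.2.le.trans one_le_two)],
          MeasureTheory.integral_const_mul, hΘ (f x t) ⟨hfx.1.le, hfx.2.le⟩]
        ring
      rw [hder, e1, e2]
      exact setIntegral_congr_fun measurableSet_ball e3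
    -- put everything together
    have hI2 : (∫ t in Ioo (0:ℝ) 1,
          ∫ z in {z : EuclideanSpace ℝ (Fin m) × ℝ |
              z.1 ∈ ball (0 : EuclideanSpace ℝ (Fin m)) 1 ∧ z.2 ∈ Set.Ioo (-2:ℝ) 2
                ∧ z.2 < f z.1 t},
            deriv (fun τ => Ψ (z.1, z.2, τ)) t)
        = ∫ z in S, f z.1 z.2 * D z := by
      calc (∫ t in Ioo (0:ℝ) 1,
          ∫ z in {z : EuclideanSpace ℝ (Fin m) × ℝ |
              z.1 ∈ ball (0 : EuclideanSpace ℝ (Fin m)) 1 ∧ z.2 ∈ Set.Ioo (-2:ℝ) 2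
                ∧ z.2 < f z.1 t},
            deriv (fun τ => Ψ (z.1, z.2, τ)) t)
          = ∫ t in Ioo (0:ℝ) 1, ∫ x in ball (0 : EuclideanSpace ℝ (Fin m)) 1,
              (f x t + c₀) * D (x, t) :=
            setIntegral_congr_fun measurableSet_Ioo hstep
        _ = ∫ z in S, (f z.1 z.2 + c₀) * D z := (key _ hfcD_int).symm
        _ = (∫ z in S, f z.1 z.2 * D z) + ∫ z in S, c₀ * D z := by
            rw [show (fun z : EuclideanSpace ℝ (Fin m) × ℝ => (f z.1 z.2 + c₀) * D z)
              = fun z => f z.1 z.2 * D z + c₀ * D z from funext fun z => by ring]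
            exact integral_add hfD_int (hD_int.const_mul c₀)
        _ = (∫ z in S, f z.1 z.2 * D z) + c₀ * ∫ z in S, D z := by
            rw [MeasureTheory.integral_const_mul]
        _ = ∫ z in S, f z.1 z.2 * D z := by rw [hD0, mul_zero, add_zero]
    have hI1 : (∫ t in Ioo (0:ℝ) 1, ∫ x in ball (0 : EuclideanSpace ℝ (Fin m)) 1,
          Ψ (x, f x t, t) * V x t * Real.sqrt (1 + ‖f' x t‖ ^ 2))
        = ∫ z in S, ψ z * V z.1 z.2 * Real.sqrt (1 + ‖f' z.1 z.2‖ ^ 2) := by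
      rw [key _ hR_int]
      refine setIntegral_congr_fun measurableSet_Ioo fun t ht => ?_
      refine setIntegral_congr_fun measurableSet_ball fun x hx => ?_
      have hfx := hrange x hx t ht
      have hone : θ (f x t) = 1 := hθ1 _ (abs_le.2 ⟨hfx.1.le, hfx.2.le⟩)
      show Ψ (x, f x t, t) * V x t * Real.sqrt (1 + ‖f' x t‖ ^ 2)
        = ψ (x, t) * V x t * Real.sqrt (1 + ‖f' x t‖ ^ 2)
      rw [show Ψ (x, f x t, t) = ψ (x, t) * θ (f x t) from rfl, hone, mul_one]
    rw [hI1, hI2] at h0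
    have hgoalrw : (fun z : EuclideanSpace ℝ (Fin m) × ℝ =>
        f z.1 z.2 * deriv (fun τ => ψ (z.1, τ)) z.2)
        = fun z : EuclideanSpace ℝ (Fin m) × ℝ => f z.1 z.2 * D z := by
      funext z
      rw [(hDeriv z).deriv]
    rw [hgoalrw]
    linarith
end
end
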